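/- arXiv:1709.10353 — 11 statements merged into one kernel-verified Lean document; each statement's English description precedes it below -/
import Mathlib

section
/- Local stability of the TB disease-free equilibrium (Theorem 3.1): consider the 4×4 real matrix J = [[−d, 0, −βe·Λ/(N·d), r1], [0, −(d+k1), βe·Λ/(N·d), 0], [0, k1, −(d+dT+r), 0], [0, 0, r, −(r1+d+dT)]]. If R0T = βe·Λ·k1/(N·d·(d+r+dT)·(d+k1)) < 1, then every complex eigenvalue of J has negative real part; if R0T > 1, then J has an eigenvalue with positive real part. -/
open Polynomial Matrix Complex

/-- Jacobian of the TB submodel at the disease-free equilibrium `(Λ/d, 0, 0, 0)`. -/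
noncomputable def tbJacDFE (Lam d dT k1 r r1 be Nv : ℝ) : Matrix (Fin 4) (Fin 4) ℝ :=
  !![-d, 0, -(be * Lam / (Nv * d)), r1;
     0, -(d + k1), be * Lam / (Nv * d), 0;
     0, k1, -(d + dT + r), 0;
     0, 0, r, -(r1 + d + dT)]

lemma tb_charpoly_eval (Lam d dT k1 r r1 be Nv : ℝ) (μ : ℂ) :
    Polynomial.eval μ (Matrix.charpoly ((tbJacDFE Lam d dT k1 r r1 be Nv).map Complex.ofReal)) =
      (μ + d) * (μ + (r1 + d + dT)) *
        (μ ^ 2 + (2 * d + k1 + dT + r) * μ +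
          ((d + k1) * (d + dT + r) - (be * Lam / (Nv * d)) * k1)) := by
  rw [Matrix.charpoly, ← Polynomial.coe_evalRingHom, RingHom.map_det]
  have h : (charmatrix ((tbJacDFE Lam d dT k1 r r1 be Nv).map Complex.ofReal)).map
      (Polynomial.evalRingHom μ) =
      !![μ + d, 0, (be * Lam / (Nv * d) : ℝ), -(r1:ℝ);
         0, μ + (d + k1 : ℝ), -(be * Lam / (Nv * d) : ℝ), 0;
         0, -(k1:ℝ), μ + (d + dT + r : ℝ), 0;
         0, 0, -(r:ℝ), μ + (r1 + d + dT : ℝ)] := by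
    ext i j
    fin_cases i <;> fin_cases j <;>
      simp [charmatrix_apply, tbJacDFE, Matrix.one_apply, vecHead, vecTail] <;> ring
  rw [show ((Polynomial.evalRingHom μ).mapMatrix (charmatrix
      ((tbJacDFE Lam d dT k1 r r1 be Nv).map Complex.ofReal))).det = _ from
      congrArg Matrix.det h, Matrix.det_succ_column_zero]
  simp [Fin.sum_univ_succ, Matrix.det_fin_three]
  ring

/-- Roots of a monic real quadratic with positive coefficients have negative real part. -/
lemma quad_root_neg_re (p c : ℝ) (hp : 0 < p) (hc : 0 < c) (μ : ℂ)
    (hq : μ ^ 2 + (p : ℂ) * μ + (c : ℂ) = 0) : μ.re < 0 := by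
  by_contra hnn
  push_neg at hnn
  have hre : μ.re * μ.re - μ.im * μ.im + p * μ.re + c = 0 := by
    have := congrArg Complex.re hq
    simpa [pow_two, Complex.mul_re, Complex.add_re] using this
  have him : μ.im * (2 * μ.re + p) = 0 := by
    have := congrArg Complex.im hq
    simp [pow_two, Complex.mul_re, Complex.mul_im, Complex.add_im] at this
    nlinarith [this]
  rcases mul_eq_zero.mp him with hy | hy
  · rw [hy] at hre
    nlinarith
  · nlinarith

/-- Local stability of the TB disease-free equilibrium (Theorem 3.1): if `R0T < 1` all
eigenvalues of the Jacobian at the DFE have negative real part; if `R0T > 1` there is an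
eigenvalue with positive real part. -/
theorem TB_DFE_local_stability (Lam d dT k1 r r1 be Nv : ℝ)
    (hLam : 0 < Lam) (hd : 0 < d) (hdT : 0 < dT) (hk1 : 0 < k1)
    (hr : 0 < r) (hr1 : 0 < r1) (hbe : 0 < be) (hNv : 0 < Nv) :
    (be * Lam * k1 / (Nv * d * (d + r + dT) * (d + k1)) < 1 →
      ∀ μ : ℂ, (Matrix.charpoly ((tbJacDFE Lam d dT k1 r r1 be Nv).map
        Complex.ofReal)).IsRoot μ → μ.re < 0) ∧
    (1 < be * Lam * k1 / (Nv * d * (d + r + dT) * (d + k1)) →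
      ∃ μ : ℂ, (Matrix.charpoly ((tbJacDFE Lam d dT k1 r r1 be Nv).map
        Complex.ofReal)).IsRoot μ ∧ 0 < μ.re) := by
  have hbpos : 0 < be * Lam / (Nv * d) := by positivity
  set b : ℝ := be * Lam / (Nv * d) with hb
  set p : ℝ := 2 * d + k1 + dT + r with hp
  set c : ℝ := (d + k1) * (d + dT + r) - b * k1 with hc
  have hppos : 0 < p := by rw [hp]; positivity
  have hden : 0 < Nv * d * (d + r + dT) * (d + k1) := by positivity
  have hbk : b * k1 * (Nv * d) = be * Lam * k1 := by
    rw [hb]; field_simp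
  constructor
  · intro hR μ hroot
    have h1 : be * Lam * k1 < Nv * d * (d + r + dT) * (d + k1) := (div_lt_one hden).mp hR
    have hcpos : 0 < c := by
      rw [hc]
      have hnd : 0 < Nv * d := by positivity
      nlinarith [hbk, h1, hnd]
    have heval := hroot
    rw [Polynomial.IsRoot, tb_charpoly_eval] at heval
    have hq' : (μ + d) * (μ + (r1 + d + dT)) * (μ ^ 2 + (p : ℂ) * μ + (c : ℂ)) = 0 := by
      rw [hp, hc, hb]
      push_cast
      linear_combination heval
    rcases mul_eq_zero.mp hq' with h12 | hq
    · rcases mul_eq_zero.mp h12 with h1 | h2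
      · have : μ = -(d : ℂ) := by linear_combination h1
        rw [this]; simpa using hd
      · have : μ = -((r1 : ℂ) + d + dT) := by linear_combination h2
        rw [this]
        simp only [neg_re, add_re, ofReal_re]
        nlinarith
    · exact quad_root_neg_re p c hppos hcpos μ hq
  · intro hR
    have h1 : Nv * d * (d + r + dT) * (d + k1) < be * Lam * k1 := (one_lt_div hden).mp hR
    have hcneg : c < 0 := by
      rw [hc]
      have hnd : 0 < Nv * d := by positivity
      nlinarith [hbk, h1, hnd]
    set s : ℝ := Real.sqrt (p ^ 2 - 4 * c) with hs
    have hs2 : s ^ 2 = p ^ 2 - 4 * c := Real.sq_sqrt (by nlinarith)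
    have hsnn : 0 ≤ s := Real.sqrt_nonneg _
    set x : ℝ := (s - p) / 2 with hx
    have hxpos : 0 < x := by
      have hsp : p < s := by nlinarith
      rw [hx]; linarith
    refine ⟨(x : ℂ), ?_, by simpa using hxpos⟩
    rw [Polynomial.IsRoot, tb_charpoly_eval]
    have hquad : x ^ 2 + p * x + c = 0 := by
      rw [hx]; linear_combination hs2 / 4
    have h3 : ((x : ℂ)) ^ 2 + (2 * (d:ℂ) + k1 + dT + r) * (x : ℂ) +
        (((d:ℂ) + k1) * ((d:ℂ) + dT + r) - (be:ℂ) * Lam / ((Nv:ℂ) * d) * k1) = 0 := by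
      have h4 : ((x ^ 2 + p * x + c : ℝ) : ℂ) = 0 := by rw [hquad]; simp
      rw [hp, hc, hb] at h4
      push_cast at h4
      linear_combination h4
    exact mul_eq_zero_of_right _ h3
end

section
/- Global asymptotic stability of the TB disease-free equilibrium (Theorem 3.2): let (S, T_L, T_I, T_T) : [0,∞) → ℝ⁴ be a continuously differentiable solution of the TB submodel with N(t) = S(t)+T_L(t)+T_I(t)+T_T(t), nonnegative initial conditions with N(0) > 0, and N(0) ≤ Λ/d. If βe·k1 < (d+r+dT)·(d+k1) (that is, the TB reproduction number evaluated at the disease-free population N = Λ/d is less than 1), then (S(t), T_L(t), T_I(t), T_T(t)) converges to (Λ/d, 0, 0, 0) as t → ∞. -/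
/-!
First the nonnegative orthant is forward invariant. The infection term `βe S T_I / N` is only
controlled while `N` stays away from `0`, so this is a first-exit argument against the barrier
`-ε exp (K t)`: as long as every component stays above it, `N' ≥ Λ - d N - dT N - O(ε)` keeps `N`
bounded below, so a component touching the barrier is pushed back faster than the barrier moves.

For a nonnegative solution `N ≥ min (N 0) (Λ / (d + dT)) > 0` and `βe S T_I / N ≤ βe T_I`, so
`V = T_L + b T_I` satisfies `V' ≤ -c V` for a suitable weight `b` exactly when
`βe k1 < (d + r + dT) (d + k1)`; hence `T_L, T_I → 0`. The remaining equations are linear,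
`T_T' = r T_I - (r1 + d + dT) T_T` and `N' = (Λ - dT (T_I + T_T)) - d N`, with forcing terms
converging, so `T_T → 0`, `N → Λ / d` and `S = N - T_L - T_I - T_T → Λ / d`.
-/

open Set Filter Real Topology

theorem le_mul_exp_of_hasDerivAt_le_mul {x x' : ℝ → ℝ} {a b K : ℝ}
    (hx : ∀ t ∈ Icc a b, HasDerivAt x (x' t) t) (hle : ∀ t ∈ Icc a b, x' t ≤ K * x t) :
    ∀ t ∈ Icc a b, x t ≤ x a * exp (K * (t - a)) := by
  intro t ht
  have := le_gronwallBound_of_liminf_deriv_right_le (ε := 0)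
    (fun s hs => (hx s hs).continuousAt.continuousWithinAt)
    (fun s hs _ hr => (hx s (Ico_subset_Icc_self hs)).hasDerivWithinAt.liminf_right_slope_le hr)
    le_rfl (fun s hs => by simpa using hle s (Ico_subset_Icc_self hs)) t ht
  rwa [gronwallBound_ε0] at this

theorem min_le_of_hasDerivAt_ge_sub_mul {x x' : ℝ → ℝ} {a b c K : ℝ} (hK : 0 < K)
    (hx : ∀ t ∈ Icc a b, HasDerivAt x (x' t) t) (hge : ∀ t ∈ Icc a b, c - K * x t ≤ x' t) :
    ∀ t ∈ Icc a b, min (x a) (c / K) ≤ x t := by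
  intro t ht
  have hgap := le_mul_exp_of_hasDerivAt_le_mul (x := fun s => c / K - x s) (K := -K)
    (fun s hs => (hx s hs).const_sub (c / K))
    (fun s hs => by have := hge s hs; field_simp; linarith) t ht
  have hexp : exp (-K * (t - a)) ≤ 1 := exp_le_one_iff.2 (by nlinarith [ht.1])
  rcases le_total (c / K) (x a) with hxa | hxa
  · exact (min_le_right _ _).trans (by nlinarith [exp_pos (-K * (t - a))])
  · exact (min_le_left _ _).trans (by nlinarith)

theorem HasDerivAt.nonpos_of_isMinOn_Ioc {g : ℝ → ℝ} {g' a τ : ℝ} (h : HasDerivAt g g' τ)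
    (ha : a < τ) (hmin : IsMinOn g (Ioc a τ) τ) : g' ≤ 0 := by
  refine le_of_tendsto ((hasDerivAt_iff_tendsto_slope.1 h).mono_left (nhdsLT_le_nhdsNE τ)) ?_
  filter_upwards [Ioo_mem_nhdsLT ha] with s hs
  rw [slope_def_field]
  exact div_nonpos_of_nonneg_of_nonpos (sub_nonneg.2 (hmin ⟨hs.1, hs.2.le⟩)) (by linarith [hs.2])

theorem eventually_lt_of_hasDerivAt_le_sub_mul {x x' f : ℝ → ℝ} {t₀ c L ε : ℝ} (hc : 0 < c)
    (hε : 0 < ε) (hx : ∀ t ≥ t₀, HasDerivAt x (x' t) t) (hle : ∀ t ≥ t₀, x' t ≤ f t - c * x t)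
    (hf : Tendsto f atTop (𝓝 L)) : ∀ᶠ t in atTop, x t < L / c + ε := by
  obtain ⟨T, hT⟩ := ((hf.eventually (eventually_lt_nhds (by linarith [mul_pos hc hε] :
    L < L + c * (ε / 2)))).and (eventually_ge_atTop t₀)).exists_forall_of_atTop
  set m := L / c + ε / 2
  have hdecay : ∀ t ≥ T, x t - m ≤ (x T - m) * exp (-c * (t - T)) := fun t ht =>
    le_mul_exp_of_hasDerivAt_le_mul (x := fun s => x s - m) (b := t)
      (fun s hs => (hx s (hT s hs.1).2).sub_const m)
      (fun s hs => by
        have h1 := hle s (hT s hs.1).2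
        have h2 := (hT s hs.1).1
        have : c * m = L + c * (ε / 2) := by simp only [m]; field_simp
        linarith) t ⟨ht, le_rfl⟩
  have htail : Tendsto (fun t => (x T - m) * exp (-c * (t - T))) atTop (𝓝 0) := by
    have : Tendsto (fun t => -c * (t - T)) atTop atBot :=
      (tendsto_atTop_add_const_right _ (-T) tendsto_id).const_mul_atTop_of_neg (by linarith)
    simpa using (tendsto_exp_atBot.comp this).const_mul (x T - m)
  filter_upwards [htail.eventually (eventually_lt_nhds (half_pos hε)), eventually_ge_atTop T]
    with t h1 h2
  linarith [hdecay t h2, show m = L / c + ε / 2 from rfl]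

theorem tendsto_of_hasDerivAt_eq_sub_mul {x f : ℝ → ℝ} {t₀ c L : ℝ} (hc : 0 < c)
    (hx : ∀ t ≥ t₀, HasDerivAt x (f t - c * x t) t) (hf : Tendsto f atTop (𝓝 L)) :
    Tendsto x atTop (𝓝 (L / c)) := by
  refine tendsto_order.2 ⟨fun l hl => ?_, fun u hu => ?_⟩
  · have := eventually_lt_of_hasDerivAt_le_sub_mul (x := -x) (f := -f) (L := -L)
      (ε := L / c - l) hc (by linarith) (fun t ht => (hx t ht).neg)
      (fun t _ => by simp only [Pi.neg_apply]; linarith) hf.neg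
    filter_upwards [this] with t ht
    simp only [Pi.neg_apply, neg_div] at ht
    linarith
  · filter_upwards [eventually_lt_of_hasDerivAt_le_sub_mul (ε := u - L / c) hc (by linarith) hx
      (fun t _ => le_rfl) hf] with t ht
    linarith

theorem tendsto_zero_of_hasDerivAt_le_neg_mul {x x' : ℝ → ℝ} {t₀ c : ℝ} (hc : 0 < c)
    (hx : ∀ t ≥ t₀, HasDerivAt x (x' t) t) (hle : ∀ t ≥ t₀, x' t ≤ -c * x t)
    (hnn : ∀ t ≥ t₀, 0 ≤ x t) : Tendsto x atTop (𝓝 0) := by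
  refine tendsto_order.2 ⟨fun l hl => ?_, fun u hu => ?_⟩
  · filter_upwards [eventually_ge_atTop t₀] with t ht
    exact hl.trans_le (hnn t ht)
  · filter_upwards [eventually_lt_of_hasDerivAt_le_sub_mul (f := fun _ => 0) (ε := u) hc hu hx
      (fun t ht => by simpa using hle t ht) tendsto_const_nhds] with t ht
    simpa using ht

theorem add_mul_exp_pos_of_hasDerivAt_gt_at_neg_level {ι : Type*} [Finite ι]
    {x x' : ι → ℝ → ℝ} {a T K δ ε : ℝ} (hK : 0 ≤ K) (hε : 0 < ε)
    (hεδ : ε * exp (K * (T - a)) ≤ δ) (hx : ∀ i, ∀ t ∈ Icc a T, HasDerivAt (x i) (x' i t) t)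
    (ha : ∀ i, 0 ≤ x i a)
    (hin : ∀ t ∈ Icc a T, ∀ E ∈ Ioc 0 δ, (∀ s ∈ Icc a t, ∀ j, -E ≤ x j s) →
      ∀ i, x i t = -E → -(K * E) < x' i t) :
    ∀ i, ∀ t ∈ Icc a T, 0 < x i t + ε * exp (K * (t - a)) := by
  set g : ι → ℝ → ℝ := fun i s => x i s + ε * exp (K * (s - a))
  have hg : ∀ i, ∀ s ∈ Icc a T, HasDerivAt (g i) (x' i s + K * (ε * exp (K * (s - a)))) s :=
    fun i s hs => ((hx i s hs).add
      ((((hasDerivAt_id s).sub_const a).const_mul K).exp.const_mul ε)).congr_deriv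
        (by simp only [id, mul_one]; ring)
  by_contra! hbad
  obtain ⟨i₀, t₀, ht₀, hg₀⟩ := hbad
  set B := ⋃ i, Icc a T ∩ g i ⁻¹' Iic 0
  have hB : IsCompact B := isCompact_iUnion fun i => isCompact_Icc.of_isClosed_subset
    (ContinuousOn.preimage_isClosed_of_isClosed
      (fun s hs => (hg i s hs).continuousAt.continuousWithinAt) isClosed_Icc isClosed_Iic)
    inter_subset_left
  -- `τ` is the first time at which some `x i` touches the barrier `-ε exp (K (t - a))`.
  obtain ⟨τ, hτB, hτmin⟩ := hB.exists_isLeast ⟨t₀, mem_iUnion.2 ⟨i₀, ht₀, hg₀⟩⟩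
  obtain ⟨i, hτ, hgτ⟩ := mem_iUnion.1 hτB
  have hbefore : ∀ j, ∀ s ∈ Ico a τ, 0 < g j s := fun j s hs => by
    by_contra! hs'
    exact (hτmin (mem_iUnion.2 ⟨j, ⟨hs.1, hs.2.le.trans hτ.2⟩, hs'⟩)).not_gt hs.2
  have haτ : a < τ := by
    refine hτ.1.lt_of_ne fun hτa => ?_
    have : 0 < g i a := by simp only [g, sub_self, mul_zero, exp_zero, mul_one]; linarith [ha i]
    exact (hgτ.trans_lt (hτa ▸ this)).false
  have hupto : ∀ j, ∀ s ∈ Icc a τ, 0 ≤ g j s := by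
    intro j s hs
    rcases hs.2.lt_or_eq with hsτ | rfl
    · exact (hbefore j s ⟨hs.1, hsτ⟩).le
    · refine ge_of_tendsto ((hg j s hτ).continuousAt.tendsto.mono_left
        (nhdsWithin_le_nhds (s := Iio s))) ?_
      filter_upwards [Ioo_mem_nhdsLT haτ] with u hu
      exact (hbefore j u ⟨hu.1.le, hu.2⟩).le
  set E := ε * exp (K * (τ - a))
  have hE : E ∈ Ioc 0 δ :=
    ⟨by positivity, hεδ.trans' (show ε * exp (K * (τ - a)) ≤ _ by gcongr; exact hτ.2)⟩
  have hhist : ∀ s ∈ Icc a τ, ∀ j, -E ≤ x j s := fun s hs j => by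
    have : ε * exp (K * (s - a)) ≤ ε * exp (K * (τ - a)) := by gcongr; exact hs.2
    linarith [hupto j s hs]
  have hxτ : x i τ = -E := by linarith [hupto i τ ⟨haτ.le, le_rfl⟩, show g i τ ≤ 0 from hgτ]
  have hderiv := (hg i τ hτ).nonpos_of_isMinOn_Ioc haτ fun s hs =>
    hgτ.trans (hupto i s ⟨hs.1.le, hs.2⟩)
  linarith [hin τ hτ E hE hhist i hxτ]

theorem nonneg_of_hasDerivAt_gt_at_neg_level {ι : Type*} [Finite ι] {x x' : ι → ℝ → ℝ}
    {a T M δ : ℝ} (hδ : 0 < δ) (hx : ∀ i, ∀ t ∈ Icc a T, HasDerivAt (x i) (x' i t) t)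
    (ha : ∀ i, 0 ≤ x i a)
    (hin : ∀ t ∈ Icc a T, ∀ E ∈ Ioc 0 δ, (∀ s ∈ Icc a t, ∀ j, -E ≤ x j s) →
      ∀ i, x i t = -E → -(M * E) < x' i t) :
    ∀ i, ∀ t ∈ Icc a T, 0 ≤ x i t := by
  set K := max M 0
  have hin' : ∀ t ∈ Icc a T, ∀ E ∈ Ioc 0 δ, (∀ s ∈ Icc a t, ∀ j, -E ≤ x j s) →
      ∀ i, x i t = -E → -(K * E) < x' i t := fun t ht E hE hhist i hi =>
    (neg_le_neg (mul_le_mul_of_nonneg_right (le_max_left M 0) hE.1.le)).trans_lt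
      (hin t ht E hE hhist i hi)
  intro i t ht
  have hlim : Tendsto (fun ε => -(ε * exp (K * (t - a)))) (𝓝[>] 0) (𝓝 0) := by
    have : Continuous fun ε : ℝ => -(ε * exp (K * (t - a))) := by fun_prop
    simpa using (this.tendsto 0).mono_left nhdsWithin_le_nhds
  refine le_of_tendsto hlim ?_
  filter_upwards [Ioo_mem_nhdsGT (show 0 < δ / exp (K * (T - a)) by positivity)] with ε hε
  have := add_mul_exp_pos_of_hasDerivAt_gt_at_neg_level (le_max_right M 0) hε.1
    ((lt_div_iff₀ (exp_pos _)).1 hε.2).le hx ha hin' i t ht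
  linarith

theorem neg_le_mul_mul_div_of_mem_Icc {β s i n n₀ C E : ℝ} (hβ : 0 ≤ β) (hn₀ : 0 < n₀)
    (hn : n₀ ≤ n) (hC : 0 ≤ C) (hE : 0 ≤ E) (hs : s ∈ Icc (-E) C) (hi : i ∈ Icc (-E) C) :
    -(β * C / n₀ * E) ≤ β * s * i / n := by
  have hsi : -(C * E) ≤ s * i := by
    rcases le_total 0 s with h0s | hs0 <;> rcases le_total 0 i with h0i | hi0 <;>
      nlinarith [hs.1, hs.2, hi.1, hi.2]
  calc -(β * C / n₀ * E) = -(β * C * E / n₀) := by ring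
    _ ≤ -(β * C * E / n) := neg_le_neg (div_le_div_of_nonneg_left (by positivity) hn₀ hn)
    _ = β * -(C * E) / n := by ring
    _ ≤ β * s * i / n := by
        rw [mul_assoc]; gcongr; linarith

structure IsTBSolution (Lam d dT k1 r r1 be : ℝ) (S TL TI TT N : ℝ → ℝ) : Prop where
  total : ∀ t, N t = S t + TL t + TI t + TT t
  hasDerivAt_S : ∀ t ≥ (0 : ℝ),
    HasDerivAt S (Lam - be * S t * TI t / N t - d * S t + r1 * TT t) t
  hasDerivAt_TL : ∀ t ≥ (0 : ℝ), HasDerivAt TL (be * S t * TI t / N t - (d + k1) * TL t) t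
  hasDerivAt_TI : ∀ t ≥ (0 : ℝ), HasDerivAt TI (k1 * TL t - (d + dT + r) * TI t) t
  hasDerivAt_TT : ∀ t ≥ (0 : ℝ), HasDerivAt TT (r * TI t - (r1 + d + dT) * TT t) t

namespace IsTBSolution

variable {Lam d dT k1 r r1 be : ℝ} {S TL TI TT N : ℝ → ℝ}

theorem hasDerivAt_total (h : IsTBSolution Lam d dT k1 r r1 be S TL TI TT N) :
    ∀ t ≥ (0 : ℝ), HasDerivAt N (Lam - d * N t - dT * (TI t + TT t)) t := by
  intro t ht
  have hN : N = S + TL + TI + TT := funext h.total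
  have := (((h.hasDerivAt_S t ht).add (h.hasDerivAt_TL t ht)).add
    (h.hasDerivAt_TI t ht)).add (h.hasDerivAt_TT t ht)
  rw [← hN] at this
  exact this.congr_deriv (by rw [h.total t]; ring)

theorem min_le_total (h : IsTBSolution Lam d dT k1 r r1 be S TL TI TT N) (hd : 0 < d)
    (hdT : 0 ≤ dT) {t E : ℝ} (ht : 0 ≤ t) (hE : ∀ s ∈ Icc 0 t, -E ≤ S s ∧ -E ≤ TL s) :
    min (N 0) ((Lam - 2 * dT * E) / (d + dT)) ≤ N t :=
  min_le_of_hasDerivAt_ge_sub_mul (by positivity) (fun s hs => h.hasDerivAt_total s hs.1)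
    (fun s hs => by
      have := h.total s
      nlinarith [hE s hs]) t ⟨ht, le_rfl⟩

theorem nonneg_on_Icc_of_le (h : IsTBSolution Lam d dT k1 r r1 be S TL TI TT N) (hLam : 0 < Lam)
    (hd : 0 < d) (hdT : 0 ≤ dT) (hk1 : 0 ≤ k1) (hr : 0 ≤ r) (hr1 : 0 ≤ r1) (hbe : 0 ≤ be)
    (h0 : 0 ≤ S 0 ∧ 0 ≤ TL 0 ∧ 0 ≤ TI 0 ∧ 0 ≤ TT 0) (hN0 : 0 < N 0) {T C : ℝ}
    (hC : Lam / (4 * (dT + 1)) ≤ C) (hSC : ∀ s ∈ Icc 0 T, S s ≤ C)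
    (hIC : ∀ s ∈ Icc 0 T, TI s ≤ C) :
    ∀ t ∈ Icc 0 T, 0 ≤ S t ∧ 0 ≤ TL t ∧ 0 ≤ TI t ∧ 0 ≤ TT t := by
  set δ := Lam / (4 * (dT + 1))
  have hδ : 0 < δ := by positivity
  have hC₀ : 0 ≤ C := hδ.le.trans hC
  set n₀ := min (N 0) (Lam / 2 / (d + dT))
  have hn₀ : 0 < n₀ := lt_min hN0 (by positivity)
  have hq : 0 ≤ be * C / n₀ := by positivity
  have key := nonneg_of_hasDerivAt_gt_at_neg_level (x := ![S, TL, TI, TT])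
    (x' := fun i t => ![Lam - be * S t * TI t / N t - d * S t + r1 * TT t,
      be * S t * TI t / N t - (d + k1) * TL t, k1 * TL t - (d + dT + r) * TI t,
      r * TI t - (r1 + d + dT) * TT t] i)
    (M := be * C / n₀ + r1 + k1 + r) hδ
    (fun i t ht => by
      fin_cases i
      exacts [h.hasDerivAt_S t ht.1, h.hasDerivAt_TL t ht.1, h.hasDerivAt_TI t ht.1,
        h.hasDerivAt_TT t ht.1])
    (fun i => by fin_cases i <;> simp [h0])
    (by
      intro t ht E hE hhist i hi
      have hxt := hhist t ⟨ht.1, le_rfl⟩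
      simp only [Fin.forall_fin_succ, Matrix.cons_val_zero, Matrix.cons_val_succ] at hxt hhist
      -- `E ≤ δ` keeps the loss `2 dT E` in `N' ≥ Lam - 2 dT E - (d + dT) N` below `Lam / 2`.
      have hNt : n₀ ≤ N t := by
        refine (min_le_min_left _ ?_).trans
          (h.min_le_total hd hdT ht.1 fun s hs => ⟨(hhist s hs).1, (hhist s hs).2.1⟩)
        have := (le_div_iff₀ (by positivity)).1 hE.2
        gcongr
        nlinarith [hE.1]
      have hTI : TI t ∈ Icc (-E) C := ⟨hxt.2.2.1, hIC t ht⟩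
      fin_cases i <;> simp only [Fin.zero_eta, Fin.mk_one, Fin.reduceFinMk, Matrix.cons_val] at hi ⊢
      · have hS : -S t ∈ Icc (-E) C := ⟨by linarith [hE.1], by linarith [hE.2, hC]⟩
        have := neg_le_mul_mul_div_of_mem_Icc hbe hn₀ hNt hC₀ hE.1.le hS hTI
        have e : be * -S t * TI t / N t = -(be * S t * TI t / N t) := by ring
        nlinarith [mul_nonneg hr1 (neg_le_iff_add_nonneg.1 hxt.2.2.2.1), hE.1]
      · have := neg_le_mul_mul_div_of_mem_Icc hbe hn₀ hNt hC₀ hE.1.le ⟨hxt.1, hSC t ht⟩ hTI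
        nlinarith [hE.1]
      · rw [hi]
        nlinarith [mul_nonneg hk1 (neg_le_iff_add_nonneg.1 hxt.2.1), mul_nonneg hq hE.1.le,
          mul_pos hd hE.1, mul_nonneg hdT hE.1.le, mul_nonneg hr hE.1.le, mul_nonneg hr1 hE.1.le]
      · rw [hi]
        nlinarith [mul_nonneg hr (neg_le_iff_add_nonneg.1 hxt.2.2.1), mul_nonneg hq hE.1.le,
          mul_pos hd hE.1, mul_nonneg hdT hE.1.le, mul_nonneg hk1 hE.1.le, mul_nonneg hr1 hE.1.le])
  exact fun t ht => ⟨key 0 t ht, key 1 t ht, key 2 t ht, key 3 t ht⟩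

theorem nonneg (h : IsTBSolution Lam d dT k1 r r1 be S TL TI TT N) (hLam : 0 < Lam) (hd : 0 < d)
    (hdT : 0 ≤ dT) (hk1 : 0 ≤ k1) (hr : 0 ≤ r) (hr1 : 0 ≤ r1) (hbe : 0 ≤ be)
    (h0 : 0 ≤ S 0 ∧ 0 ≤ TL 0 ∧ 0 ≤ TI 0 ∧ 0 ≤ TT 0) (hN0 : 0 < N 0) :
    ∀ t ≥ (0 : ℝ), 0 ≤ S t ∧ 0 ≤ TL t ∧ 0 ≤ TI t ∧ 0 ≤ TT t := by
  intro T hT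
  have hcont : ContinuousOn (fun s => max (S s) (TI s)) (Icc 0 T) :=
    ContinuousOn.sup (fun s hs => (h.hasDerivAt_S s hs.1).continuousAt.continuousWithinAt)
      (fun s hs => (h.hasDerivAt_TI s hs.1).continuousAt.continuousWithinAt)
  obtain ⟨C, hC⟩ := isCompact_Icc.bddAbove_image hcont
  have hbound : ∀ s ∈ Icc 0 T, max (S s) (TI s) ≤ max C (Lam / (4 * (dT + 1))) :=
    fun s hs => (hC (mem_image_of_mem _ hs)).trans (le_max_left _ _)
  exact h.nonneg_on_Icc_of_le hLam hd hdT hk1 hr hr1 hbe h0 hN0 (le_max_right _ _)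
    (fun s hs => (le_max_left _ _).trans (hbound s hs))
    (fun s hs => (le_max_right _ _).trans (hbound s hs)) T ⟨hT, le_rfl⟩

theorem tendsto_TL_TI (h : IsTBSolution Lam d dT k1 r r1 be S TL TI TT N) (hLam : 0 < Lam)
    (hd : 0 < d) (hdT : 0 ≤ dT) (hk1 : 0 < k1) (hr : 0 ≤ r) (hbe : 0 ≤ be)
    (hpos : ∀ t ≥ (0 : ℝ), 0 ≤ S t ∧ 0 ≤ TL t ∧ 0 ≤ TI t ∧ 0 ≤ TT t) (hN0 : 0 < N 0)
    (hR : be * k1 < (d + r + dT) * (d + k1)) :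
    Tendsto TL atTop (𝓝 0) ∧ Tendsto TI atTop (𝓝 0) := by
  have hNpos : ∀ t ≥ (0 : ℝ), 0 < N t := fun t ht =>
    (lt_min hN0 (by simpa using div_pos hLam (by positivity : 0 < d + dT))).trans_le
      (h.min_le_total hd hdT (E := 0) ht fun s hs => by
        simpa using ⟨(hpos s hs.1).1, (hpos s hs.1).2.1⟩)
  -- Any weight strictly between `βe / (d + dT + r)` and `(d + k1) / k1` makes `V' ≤ -c V`.
  obtain ⟨b, hb₁, hb₂⟩ := exists_between (show be / (d + dT + r) < (d + k1) / k1 by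
    rw [div_lt_div_iff₀ (by positivity) hk1]; linarith)
  have hb : 0 < b := (by positivity : 0 ≤ be / (d + dT + r)).trans_lt hb₁
  rw [div_lt_iff₀ (by positivity)] at hb₁
  rw [lt_div_iff₀ hk1] at hb₂
  set c := min (d + k1 - b * k1) ((b * (d + dT + r) - be) / b)
  have hc : 0 < c := lt_min (by linarith) (div_pos (by linarith) hb)
  have hc₁ : c ≤ d + k1 - b * k1 := min_le_left _ _
  have hc₂ : c * b ≤ b * (d + dT + r) - be := (le_div_iff₀ hb).1 (min_le_right _ _)
  have hV : Tendsto (fun t => TL t + b * TI t) atTop (𝓝 0) := by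
    refine tendsto_zero_of_hasDerivAt_le_neg_mul hc
      (fun t ht => (h.hasDerivAt_TL t ht).add ((h.hasDerivAt_TI t ht).const_mul b))
      (fun t ht => ?_) (fun t ht => by nlinarith [hpos t ht])
    obtain ⟨hS, hTL, hTI, hTT⟩ := hpos t ht
    have hinf : be * S t * TI t / N t ≤ be * TI t := by
      rw [div_le_iff₀ (hNpos t ht), h.total t]
      nlinarith [mul_nonneg hbe hTI]
    nlinarith [mul_le_mul_of_nonneg_right hc₁ hTL, mul_le_mul_of_nonneg_right hc₂ hTI]
  refine ⟨tendsto_of_tendsto_of_tendsto_of_le_of_le' tendsto_const_nhds hV ?_ ?_,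
    tendsto_of_tendsto_of_tendsto_of_le_of_le' tendsto_const_nhds
      (by simpa using hV.div_const b) ?_ ?_⟩
  all_goals filter_upwards [eventually_ge_atTop 0] with t ht
  · exact (hpos t ht).2.1
  · nlinarith [hpos t ht]
  · exact (hpos t ht).2.2.1
  · rw [le_div_iff₀ hb]; nlinarith [hpos t ht]

end IsTBSolution

theorem TB_DFE_global_stability_general (Lam d dT k1 r r1 be : ℝ)
    (hLam : 0 < Lam) (hd : 0 < d) (hdT : 0 < dT) (hk1 : 0 < k1)
    (hr : 0 < r) (hr1 : 0 < r1) (hbe : 0 < be)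
    (S TL TI TT N : ℝ → ℝ)
    (hN : ∀ t, N t = S t + TL t + TI t + TT t)
    (hS : ∀ t ≥ (0 : ℝ), HasDerivAt S (Lam - be * S t * TI t / N t - d * S t + r1 * TT t) t)
    (hTL : ∀ t ≥ (0 : ℝ), HasDerivAt TL (be * S t * TI t / N t - (d + k1) * TL t) t)
    (hTI : ∀ t ≥ (0 : ℝ), HasDerivAt TI (k1 * TL t - (d + dT + r) * TI t) t)
    (hTT : ∀ t ≥ (0 : ℝ), HasDerivAt TT (r * TI t - (r1 + d + dT) * TT t) t)
    (h0 : 0 ≤ S 0 ∧ 0 ≤ TL 0 ∧ 0 ≤ TI 0 ∧ 0 ≤ TT 0)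
    (hN0 : 0 < N 0)
    (hR : be * k1 < (d + r + dT) * (d + k1)) :
    Filter.Tendsto S Filter.atTop (nhds (Lam / d)) ∧
    Filter.Tendsto TL Filter.atTop (nhds 0) ∧
    Filter.Tendsto TI Filter.atTop (nhds 0) ∧
    Filter.Tendsto TT Filter.atTop (nhds 0) := by
  have h : IsTBSolution Lam d dT k1 r r1 be S TL TI TT N := ⟨hN, hS, hTL, hTI, hTT⟩
  have hpos := h.nonneg hLam hd hdT.le hk1.le hr.le hr1.le hbe.le h0 hN0
  obtain ⟨hTL0, hTI0⟩ := h.tendsto_TL_TI hLam hd hdT.le hk1 hr.le hbe.le hpos hN0 hR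
  have hTT0 : Tendsto TT atTop (𝓝 0) := by
    have := tendsto_of_hasDerivAt_eq_sub_mul (by positivity) hTT (hTI0.const_mul r)
    rwa [mul_zero, zero_div] at this
  have hNlim : Tendsto N atTop (𝓝 (Lam / d)) := by
    refine tendsto_of_hasDerivAt_eq_sub_mul (f := fun t => Lam - dT * (TI t + TT t)) hd
      (fun t ht => (h.hasDerivAt_total t ht).congr_deriv (by ring)) ?_
    simpa using ((hTI0.add hTT0).const_mul dT).const_sub Lam
  have hSeq : S = fun t => N t - TL t - TI t - TT t := funext fun t => by rw [h.total t]; ring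
  refine ⟨?_, hTL0, hTI0, hTT0⟩
  simpa [hSeq] using ((hNlim.sub hTL0).sub hTI0).sub hTT0

/-- Global asymptotic stability of the TB disease-free equilibrium (Theorem 3.2):
a nonnegative solution of the TB submodel with total population `N(t) = S+T_L+T_I+T_T`,
`0 < N 0 ≤ Λ/d`, converges to `(Λ/d, 0, 0, 0)` provided the reproduction number at the
disease-free population is less than one, i.e. `βe·k1 < (d+r+dT)·(d+k1)`. -/
theorem TB_DFE_global_stability (Lam d dT k1 r r1 be : ℝ)
    (hLam : 0 < Lam) (hd : 0 < d) (hdT : 0 < dT) (hk1 : 0 < k1)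
    (hr : 0 < r) (hr1 : 0 < r1) (hbe : 0 < be)
    (S TL TI TT N : ℝ → ℝ)
    (hN : ∀ t, N t = S t + TL t + TI t + TT t)
    (hS : ∀ t ≥ (0 : ℝ), HasDerivAt S (Lam - be * S t * TI t / N t - d * S t + r1 * TT t) t)
    (hTL : ∀ t ≥ (0 : ℝ), HasDerivAt TL (be * S t * TI t / N t - (d + k1) * TL t) t)
    (hTI : ∀ t ≥ (0 : ℝ), HasDerivAt TI (k1 * TL t - (d + dT + r) * TI t) t)
    (hTT : ∀ t ≥ (0 : ℝ), HasDerivAt TT (r * TI t - (r1 + d + dT) * TT t) t)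
    (h0 : 0 ≤ S 0 ∧ 0 ≤ TL 0 ∧ 0 ≤ TI 0 ∧ 0 ≤ TT 0)
    (hN0 : 0 < N 0) (hN0le : N 0 ≤ Lam / d)
    (hR : be * k1 < (d + r + dT) * (d + k1)) :
    Filter.Tendsto S Filter.atTop (nhds (Lam / d)) ∧
    Filter.Tendsto TL Filter.atTop (nhds 0) ∧
    Filter.Tendsto TI Filter.atTop (nhds 0) ∧
    Filter.Tendsto TT Filter.atTop (nhds 0) :=
  TB_DFE_global_stability_general Lam d dT k1 r r1 be hLam hd hdT hk1 hr hr1 hbe S TL TI TT N hN hS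
    hTL hTI hTT h0 hN0 hR
end

section
/- Sign of the endemic force of TB infection: let λT* = (βe·Λ·k1·(d+dT+r1)/N − d·(d+r+dT)·(d+k1)·(d+dT+r1)) / ((d+dT+r)·(d+k1)·(d+dT+r1) − r·k1·r1). Then for all positive parameter values the denominator (d+dT+r)·(d+k1)·(d+dT+r1) − r·k1·r1 is strictly positive, and λT* > 0 if and only if R0T = βe·Λ·k1/(N·d·(d+r+dT)·(d+k1)) > 1. -/
/-- Sign of the endemic force of TB infection: the denominator of `λT*` is positive, and
`λT* > 0` if and only if `R0T > 1`. -/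
theorem TB_force_of_infection_sign (Lam d dT k1 r r1 be Nv : ℝ)
    (hLam : 0 < Lam) (hd : 0 < d) (hdT : 0 < dT) (hk1 : 0 < k1)
    (hr : 0 < r) (hr1 : 0 < r1) (hbe : 0 < be) (hNv : 0 < Nv) :
    0 < (d + dT + r) * (d + k1) * (d + dT + r1) - r * k1 * r1 ∧
    (0 < (be * Lam * k1 * (d + dT + r1) / Nv
          - d * (d + r + dT) * (d + k1) * (d + dT + r1)) /
        ((d + dT + r) * (d + k1) * (d + dT + r1) - r * k1 * r1) ↔
      1 < be * Lam * k1 / (Nv * d * (d + r + dT) * (d + k1))) := by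
  have hden : 0 < (d + dT + r) * (d + k1) * (d + dT + r1) - r * k1 * r1 := by
    have h1 : r * k1 * r1 < (d + dT + r) * (d + k1) * (d + dT + r1) := by
      have : r * k1 < (d + dT + r) * (d + k1) := by
        apply mul_lt_mul' (by linarith) (by linarith) (le_of_lt hk1) (by linarith)
      calc r * k1 * r1 < (d + dT + r) * (d + k1) * r1 := by
            exact mul_lt_mul_of_pos_right this hr1
        _ < (d + dT + r) * (d + k1) * (d + dT + r1) := by
            apply mul_lt_mul_of_pos_left (by linarith)
            positivity
    linarith
  refine ⟨hden, ?_⟩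
  have hY : 0 < Nv * d * (d + r + dT) * (d + k1) := by positivity
  rw [lt_div_iff₀ hden, zero_mul, lt_div_iff₀ hY, one_mul]
  constructor
  · intro h
    have h' : 0 < be * Lam * k1 * (d + dT + r1) / Nv
        - d * (d + r + dT) * (d + k1) * (d + dT + r1) := h
    rw [sub_pos, lt_div_iff₀ hNv] at h'
    nlinarith [mul_pos hd hdT, add_pos hd (add_pos hdT hr1)]
  · intro h
    rw [sub_pos, lt_div_iff₀ hNv]
    nlinarith [add_pos hd (add_pos hdT hr1)]
end

section
/- Global asymptotic stability of the HIV disease-free equilibrium (Theorem 4.2): let (S, H, H^T) : [0,∞) → ℝ³ be a continuously differentiable solution of the HIV submodel with N(t) = S(t)+H(t)+H^T(t), nonnegative initial conditions with N(0) > 0, and N(0) ≤ Λ/d. If λσ < r2+d+dH (that is, the HIV reproduction number evaluated at the disease-free population N = Λ/d is less than 1), then (S(t), H(t), H^T(t)) converges to (Λ/d, 0, 0) as t → ∞. -/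
/-!
Nonnegativity comes first. `S` cannot cross `0` because `S' = Λ` there; the total population
satisfies `N' = Λ - (d + dH) N + dH S`, which keeps `N` above `min (N 0) (Λ / (d + dH)) > 0`;
`H' = c(t) H` with `c` continuous gives `H(t) = H(0) exp ∫₀ᵗ c`; and `H^T` is driven by `r2 H ≥ 0`.
Then `S ≤ N` gives `H' ≤ -(r2 + d + dH - λσ) H`, so `H` decays exponentially. The linear
equations for `H^T` and `N - Λ / d`, forced by exponentially decaying terms, then make them decay
at any smaller rate `ε`, and `S = N - H - H^T` converges to `Λ / d`.
-/

open Real Filter Set Topology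

theorem le_of_hasDerivAt_pos_of_eq {f f' : ℝ → ℝ} {c : ℝ}
    (hf : ∀ t ≥ 0, HasDerivAt f (f' t) t) (h0 : c ≤ f 0)
    (hpos : ∀ t ≥ 0, f t = c → 0 < f' t) {t : ℝ} (ht : 0 ≤ t) : c ≤ f t := by
  have h := image_le_of_deriv_right_lt_deriv_boundary' (a := 0) (b := t) (f := fun u => -f u)
    (f' := fun u => -f' u) (B := fun _ => -c) (B' := fun _ => 0)
    (fun u hu => (hf u hu.1).continuousAt.neg.continuousWithinAt)
    (fun u hu => (hf u hu.1).neg.hasDerivWithinAt) (neg_le_neg h0) continuousOn_const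
    (fun u _ => hasDerivWithinAt_const u _ _)
    (fun u hu hfu => neg_neg_of_pos (hpos u hu.1 (neg_inj.mp hfu))) ⟨ht, le_rfl⟩
  exact neg_le_neg_iff.mp h

theorem eq_mul_exp_integral_of_hasDerivAt_mul {f c : ℝ → ℝ} (hc : ContinuousOn c (Ici 0))
    (hf : ∀ t ≥ 0, HasDerivAt f (c t * f t) t) {t : ℝ} (ht : 0 ≤ t) :
    f t = f 0 * exp (∫ s in (0 : ℝ)..t, c s) := by
  -- `c` is extended continuously to `ℝ` so that its primitive is differentiable at `0` too
  set g : ℝ → ℝ := fun s => c (max s 0)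
  have hg : Continuous g :=
    hc.comp_continuous (continuous_id.max continuous_const) fun s => le_max_right s 0
  have hgc : ∀ s ≥ 0, g s = c s := fun s hs => by simp only [g, max_eq_left hs]
  set I : ℝ → ℝ := fun u => ∫ s in (0 : ℝ)..u, g s
  have hI : ∀ u, HasDerivAt I (g u) u := fun u => (hg.integral_hasStrictDerivAt 0 u).hasDerivAt
  have hφ : ∀ u ≥ 0, HasDerivAt (fun u => f u * exp (-I u)) 0 u := by
    intro u hu
    refine ((hf u hu).mul (hI u).neg.exp).congr_deriv ?_
    rw [hgc u hu]
    ring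
  have hconst := constant_of_has_deriv_right_zero (a := 0) (b := t)
    (fun u hu => (hφ u hu.1).continuousAt.continuousWithinAt)
    (fun u hu => (hφ u hu.1).hasDerivWithinAt) t ⟨ht, le_rfl⟩
  have hIc : I t = ∫ s in (0 : ℝ)..t, c s :=
    intervalIntegral.integral_congr fun s hs => hgc s (by simpa [ht] using hs.1)
  simp only [I, intervalIntegral.integral_same, neg_zero, exp_zero, mul_one] at hconst
  rw [← hIc, ← hconst, mul_assoc, ← exp_add, neg_add_cancel, exp_zero, mul_one]

theorem antitoneOn_Ici_of_hasDerivAt_nonpos {f f' : ℝ → ℝ} {a : ℝ}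
    (hf : ∀ t ≥ a, HasDerivAt f (f' t) t) (hf' : ∀ t ≥ a, f' t ≤ 0) : AntitoneOn f (Ici a) :=
  antitoneOn_of_hasDerivWithinAt_nonpos (convex_Ici a)
    (fun t ht => (hf t ht).continuousAt.continuousWithinAt)
    (fun t ht => (hf t (interior_subset ht)).hasDerivWithinAt)
    (fun t ht => hf' t (interior_subset ht))

/-- The right-hand side is the solution of `u' = -a u + C exp (-ε t)` with `u 0 = f 0`. -/
theorem le_of_hasDerivAt_le_linear {f f' : ℝ → ℝ} {a ε C : ℝ} (hεa : ε ≠ a)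
    (hf : ∀ t ≥ 0, HasDerivAt f (f' t) t)
    (hle : ∀ t ≥ 0, f' t ≤ -a * f t + C * exp (-ε * t)) {t : ℝ} (ht : 0 ≤ t) :
    f t ≤ C / (a - ε) * exp (-ε * t) + (f 0 - C / (a - ε)) * exp (-a * t) := by
  set K := C / (a - ε)
  have hK : (a - ε) * K = C := mul_div_cancel₀ C (sub_ne_zero.mpr hεa.symm)
  have hexp (b u : ℝ) : HasDerivAt (fun u => exp (b * u)) (b * exp (b * u)) u := by
    simpa [mul_comm] using ((hasDerivAt_id u).const_mul b).exp
  have hg : ∀ u ≥ 0, HasDerivAt (fun u => (f u - K * exp (-ε * u)) * exp (a * u))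
      ((f' u + a * f u - C * exp (-ε * u)) * exp (a * u)) u := by
    intro u hu
    refine (((hf u hu).sub ((hexp (-ε) u).const_mul K)).mul (hexp a u)).congr_deriv ?_
    rw [← hK, Pi.sub_apply]
    ring
  have hanti := antitoneOn_Ici_of_hasDerivAt_nonpos hg fun u hu =>
    mul_nonpos_of_nonpos_of_nonneg (by linarith [hle u hu]) (exp_pos _).le
  have h := mul_le_mul_of_nonneg_right (hanti self_mem_Ici ht ht) (exp_pos (-a * t)).le
  have hinv : exp (a * t) * exp (-a * t) = 1 := by rw [← exp_add]; simp
  simp only [mul_zero, exp_zero, mul_one, mul_assoc, hinv] at h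
  linarith

theorem le_mul_exp_of_hasDerivAt_le {f f' : ℝ → ℝ} {a : ℝ}
    (hf : ∀ t ≥ 0, HasDerivAt f (f' t) t) (hle : ∀ t ≥ 0, f' t ≤ -a * f t) {t : ℝ}
    (ht : 0 ≤ t) : f t ≤ f 0 * exp (-a * t) := by
  simpa using le_of_hasDerivAt_le_linear (ε := a + 1) (C := 0) (by linarith) hf
    (by simpa using hle) ht

theorem le_max_mul_exp_of_hasDerivAt_le_linear {f f' : ℝ → ℝ} {a ε C : ℝ} (hεa : ε < a)
    (hf : ∀ t ≥ 0, HasDerivAt f (f' t) t)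
    (hle : ∀ t ≥ 0, f' t ≤ -a * f t + C * exp (-ε * t)) {t : ℝ} (ht : 0 ≤ t) :
    f t ≤ max (f 0) (C / (a - ε)) * exp (-ε * t) := by
  have h := le_of_hasDerivAt_le_linear hεa.ne hf hle ht
  have hdecay : exp (-a * t) ≤ exp (-ε * t) := exp_le_exp.mpr (by nlinarith)
  rcases le_total (f 0) (C / (a - ε)) with h0 | h0
  · rw [max_eq_right h0]
    nlinarith [exp_pos (-a * t)]
  · rw [max_eq_left h0]
    nlinarith

theorem tendsto_zero_of_le_mul_exp {f : ℝ → ℝ} {A B ε : ℝ} (hε : 0 < ε)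
    (hlow : ∀ t ≥ 0, -(A * exp (-ε * t)) ≤ f t) (hup : ∀ t ≥ 0, f t ≤ B * exp (-ε * t)) :
    Tendsto f atTop (𝓝 0) := by
  have hexp : Tendsto (fun t => exp (-ε * t)) atTop (𝓝 0) :=
    tendsto_exp_atBot.comp (tendsto_id.const_mul_atTop_of_neg (neg_neg_of_pos hε))
  have hA := (hexp.const_mul A).neg
  have hB := hexp.const_mul B
  simp only [mul_zero, neg_zero] at hA hB
  exact tendsto_of_tendsto_of_tendsto_of_le_of_le' hA hB
    (eventually_ge_atTop 0 |>.mono hlow) (eventually_ge_atTop 0 |>.mono hup)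

structure IsHIVSolution (Lam d dH r2 ls : ℝ) (S H HT N : ℝ → ℝ) : Prop where
  total : ∀ t, N t = S t + H t + HT t
  hasDerivAt_S : ∀ t ≥ (0 : ℝ), HasDerivAt S (Lam - d * S t - ls * S t * H t / N t) t
  hasDerivAt_H : ∀ t ≥ (0 : ℝ), HasDerivAt H (ls * S t * H t / N t - (r2 + d + dH) * H t) t
  hasDerivAt_HT : ∀ t ≥ (0 : ℝ), HasDerivAt HT (r2 * H t - (d + dH) * HT t) t

namespace IsHIVSolution

variable {Lam d dH r2 ls : ℝ} {S H HT N : ℝ → ℝ}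

theorem hasDerivAt_N (hs : IsHIVSolution Lam d dH r2 ls S H HT N) {t : ℝ} (ht : 0 ≤ t) :
    HasDerivAt N (Lam - d * N t - dH * (H t + HT t)) t := by
  have h := ((hs.hasDerivAt_S t ht).add (hs.hasDerivAt_H t ht)).add (hs.hasDerivAt_HT t ht)
  refine (h.congr_of_eventuallyEq (Eventually.of_forall hs.total)).congr_deriv ?_
  rw [hs.total t]
  ring

theorem S_nonneg (hs : IsHIVSolution Lam d dH r2 ls S H HT N) (hLam : 0 < Lam)
    (hS0 : 0 ≤ S 0) {t : ℝ} (ht : 0 ≤ t) : 0 ≤ S t :=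
  le_of_hasDerivAt_pos_of_eq hs.hasDerivAt_S hS0 (fun u _ hu => by simpa [hu] using hLam) ht

theorem N_pos (hs : IsHIVSolution Lam d dH r2 ls S H HT N) (hLam : 0 < Lam) (hd : 0 < d)
    (hdH : 0 ≤ dH) (hS0 : 0 ≤ S 0) (hN0 : 0 < N 0) {t : ℝ} (ht : 0 ≤ t) : 0 < N t := by
  have h := le_max_mul_exp_of_hasDerivAt_le_linear (f := fun u => -N u) (a := d + dH) (ε := 0)
    (C := -Lam) (by linarith) (fun u hu => (hs.hasDerivAt_N hu).neg) (fun u hu => by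
      simp only [neg_zero, zero_mul, exp_zero, mul_one]
      nlinarith [hs.total u, mul_nonneg hdH (hs.S_nonneg hLam hS0 hu)]) ht
  have hLd : 0 < Lam / (d + dH) := div_pos hLam (by linarith)
  simp only [neg_zero, zero_mul, exp_zero, mul_one, sub_zero, neg_div] at h
  have := max_lt (neg_lt_zero.mpr hN0) (neg_lt_zero.mpr hLd)
  linarith

theorem H_nonneg (hs : IsHIVSolution Lam d dH r2 ls S H HT N) (hN : ∀ t ≥ 0, 0 < N t)
    (hH0 : 0 ≤ H 0) {t : ℝ} (ht : 0 ≤ t) : 0 ≤ H t := by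
  have hS : ContinuousOn S (Ici 0) := fun u hu =>
    (hs.hasDerivAt_S u hu).continuousAt.continuousWithinAt
  have hNc : ContinuousOn N (Ici 0) := fun u hu =>
    (hs.hasDerivAt_N hu).continuousAt.continuousWithinAt
  have hc : ContinuousOn (fun u => ls * S u / N u - (r2 + d + dH)) (Ici 0) :=
    ((continuousOn_const.mul hS).div hNc fun u hu => (hN u hu).ne').sub continuousOn_const
  rw [eq_mul_exp_integral_of_hasDerivAt_mul hc
    (fun u hu => (hs.hasDerivAt_H u hu).congr_deriv (by ring)) ht]
  positivity

theorem HT_nonneg (hs : IsHIVSolution Lam d dH r2 ls S H HT N) (hr2 : 0 ≤ r2)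
    (hH : ∀ t ≥ 0, 0 ≤ H t) (hHT0 : 0 ≤ HT 0) {t : ℝ} (ht : 0 ≤ t) : 0 ≤ HT t := by
  have h := le_mul_exp_of_hasDerivAt_le (f := fun u => -HT u) (a := d + dH)
    (fun u hu => (hs.hasDerivAt_HT u hu).neg) (fun u hu => by nlinarith [hH u hu]) ht
  nlinarith [exp_pos (-(d + dH) * t)]

theorem H_le_mul_exp (hs : IsHIVSolution Lam d dH r2 ls S H HT N) (hls : 0 ≤ ls)
    (hN : ∀ t ≥ 0, 0 < N t) (hH : ∀ t ≥ 0, 0 ≤ H t) (hHT : ∀ t ≥ 0, 0 ≤ HT t) {ε : ℝ}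
    (hε : ε ≤ r2 + d + dH - ls) {t : ℝ} (ht : 0 ≤ t) : H t ≤ H 0 * exp (-ε * t) := by
  refine le_mul_exp_of_hasDerivAt_le hs.hasDerivAt_H (fun u hu => ?_) ht
  have hSN : S u / N u ≤ 1 :=
    (div_le_one (hN u hu)).mpr (by linarith [hs.total u, hH u hu, hHT u hu])
  have hinc : ls * S u * H u / N u ≤ ls * H u := by
    rw [mul_right_comm, mul_div_assoc]
    exact mul_le_of_le_one_right (mul_nonneg hls (hH u hu)) hSN
  nlinarith [hH u hu]

theorem HT_le_max_mul_exp (hs : IsHIVSolution Lam d dH r2 ls S H HT N) (hr2 : 0 ≤ r2)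
    {ε : ℝ} (hε : ε < d + dH) (hH : ∀ t ≥ 0, H t ≤ H 0 * exp (-ε * t)) {t : ℝ} (ht : 0 ≤ t) :
    HT t ≤ max (HT 0) (r2 * H 0 / (d + dH - ε)) * exp (-ε * t) :=
  le_max_mul_exp_of_hasDerivAt_le_linear hε hs.hasDerivAt_HT
    (fun u hu => by nlinarith [hH u hu]) ht

theorem tendsto_N (hs : IsHIVSolution Lam d dH r2 ls S H HT N) (hdH : 0 ≤ dH) {ε M : ℝ}
    (hε : 0 < ε) (hεd : ε < d) (hH : ∀ t ≥ 0, 0 ≤ H t) (hHT : ∀ t ≥ 0, 0 ≤ HT t)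
    (hHHT : ∀ t ≥ 0, H t + HT t ≤ M * exp (-ε * t)) : Tendsto N atTop (𝓝 (Lam / d)) := by
  have hd : d ≠ 0 := by linarith
  have hf : ∀ t ≥ 0, HasDerivAt (fun u => N u - Lam / d)
      (-d * (N t - Lam / d) - dH * (H t + HT t)) t := fun t ht =>
    ((hs.hasDerivAt_N ht).sub_const _).congr_deriv (by field_simp; ring)
  have hup := fun t (ht : 0 ≤ t) => le_max_mul_exp_of_hasDerivAt_le_linear (C := 0) hεd hf
    (fun u hu => by nlinarith [hH u hu, hHT u hu, exp_pos (-ε * u)]) ht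
  have hlow := fun t (ht : 0 ≤ t) => le_max_mul_exp_of_hasDerivAt_le_linear (C := dH * M)
    (f := fun u => -(N u - Lam / d)) hεd
    (fun u hu => (hf u hu).neg) (fun u hu => by nlinarith [hHHT u hu]) ht
  exact tendsto_sub_nhds_zero_iff.mp
    (tendsto_zero_of_le_mul_exp hε (fun t ht => neg_le.mp (hlow t ht)) hup)

end IsHIVSolution

theorem HIV_DFE_global_stability_general (Lam d dH r2 ls : ℝ)
    (hLam : 0 < Lam) (hd : 0 < d) (hdH : 0 < dH) (hr2 : 0 < r2) (hls : 0 < ls)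
    (S H HT N : ℝ → ℝ)
    (hN : ∀ t, N t = S t + H t + HT t)
    (hS : ∀ t ≥ (0 : ℝ), HasDerivAt S (Lam - d * S t - ls * S t * H t / N t) t)
    (hH : ∀ t ≥ (0 : ℝ), HasDerivAt H (ls * S t * H t / N t - (r2 + d + dH) * H t) t)
    (hHT : ∀ t ≥ (0 : ℝ), HasDerivAt HT (r2 * H t - (d + dH) * HT t) t)
    (h0 : 0 ≤ S 0 ∧ 0 ≤ H 0 ∧ 0 ≤ HT 0)
    (hN0 : 0 < N 0)
    (hR : ls < r2 + d + dH) :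
    Filter.Tendsto S Filter.atTop (nhds (Lam / d)) ∧
    Filter.Tendsto H Filter.atTop (nhds 0) ∧
    Filter.Tendsto HT Filter.atTop (nhds 0) := by
  obtain ⟨hS0, hH0, hHT0⟩ := h0
  have hs : IsHIVSolution Lam d dH r2 ls S H HT N := ⟨hN, hS, hH, hHT⟩
  have hNpos : ∀ t ≥ 0, 0 < N t := fun t => hs.N_pos hLam hd hdH.le hS0 hN0
  have hHnn : ∀ t ≥ 0, 0 ≤ H t := fun t => hs.H_nonneg hNpos hH0
  have hHTnn : ∀ t ≥ 0, 0 ≤ HT t := fun t => hs.HT_nonneg hr2.le hHnn hHT0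
  obtain ⟨ε, hε, hεmin⟩ := exists_between (lt_min (sub_pos.mpr hR) hd)
  obtain ⟨hεR, hεd⟩ := lt_min_iff.mp hεmin
  have hHle : ∀ t ≥ 0, H t ≤ H 0 * exp (-ε * t) := fun t =>
    hs.H_le_mul_exp hls.le hNpos hHnn hHTnn hεR.le
  have hHTle := fun t (ht : 0 ≤ t) =>
    hs.HT_le_max_mul_exp hr2.le (by linarith : ε < d + dH) hHle ht
  have hHlim : Tendsto H atTop (𝓝 0) :=
    tendsto_zero_of_le_mul_exp (A := 0) hε (fun t ht => by simpa using hHnn t ht) hHle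
  have hHTlim : Tendsto HT atTop (𝓝 0) :=
    tendsto_zero_of_le_mul_exp (A := 0) hε (fun t ht => by simpa using hHTnn t ht) hHTle
  have hNlim := hs.tendsto_N hdH.le (M := H 0 + max (HT 0) (r2 * H 0 / (d + dH - ε))) hε hεd
    hHnn hHTnn fun t ht => by linarith [hHle t ht, hHTle t ht]
  have hSeq : S = fun t => N t - H t - HT t := funext fun t => by linarith [hN t]
  refine ⟨?_, hHlim, hHTlim⟩
  simpa [hSeq] using (hNlim.sub hHlim).sub hHTlim

/-- Global asymptotic stability of the HIV disease-free equilibrium (Theorem 4.2):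
a nonnegative solution of the HIV submodel with total population `N(t) = S+H+H^T`,
`0 < N 0 ≤ Λ/d`, converges to `(Λ/d, 0, 0)` provided `λσ < r2+d+dH`, i.e. the HIV
reproduction number at the disease-free population is less than one. -/
theorem HIV_DFE_global_stability (Lam d dH r2 ls : ℝ)
    (hLam : 0 < Lam) (hd : 0 < d) (hdH : 0 < dH) (hr2 : 0 < r2) (hls : 0 < ls)
    (S H HT N : ℝ → ℝ)
    (hN : ∀ t, N t = S t + H t + HT t)
    (hS : ∀ t ≥ (0 : ℝ), HasDerivAt S (Lam - d * S t - ls * S t * H t / N t) t)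
    (hH : ∀ t ≥ (0 : ℝ), HasDerivAt H (ls * S t * H t / N t - (r2 + d + dH) * H t) t)
    (hHT : ∀ t ≥ (0 : ℝ), HasDerivAt HT (r2 * H t - (d + dH) * HT t) t)
    (h0 : 0 ≤ S 0 ∧ 0 ≤ H 0 ∧ 0 ≤ HT 0)
    (hN0 : 0 < N 0) (hN0le : N 0 ≤ Lam / d)
    (hR : ls < r2 + d + dH) :
    Filter.Tendsto S Filter.atTop (nhds (Lam / d)) ∧
    Filter.Tendsto H Filter.atTop (nhds 0) ∧
    Filter.Tendsto HT Filter.atTop (nhds 0) :=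
  HIV_DFE_global_stability_general Lam d dH r2 ls hLam hd hdH hr2 hls S H HT N hN hS hH hHT h0 hN0
    hR
end

section
/- Existence of the HIV endemic equilibrium (Theorem 4.3): let S̃ = N·(r2+d+dH)/(λσ), H̃ = Λ/(r2+d+dH) − d·N/(λσ), and H̃T = r2·H̃/(d+dH). Then (S̃, H̃, H̃T) satisfies the steady-state equations Λ − d·S̃ − λσ·S̃·H̃/N = 0, λσ·S̃·H̃/N − (r2+d+dH)·H̃ = 0, r2·H̃ − (d+dH)·H̃T = 0, and H̃ > 0 (equivalently, all three components are positive) if and only if R0H = Λ·λσ/(N·d·(r2+d+dH)) > 1. -/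
/-! At `S̃` the force of infection `λσ·S̃/N` equals the removal rate `r2 + d + dH` of the
infected class, so the `H`-equation holds for every `H̃` and the `S`-equation then pins `H̃`
down. Positivity of `H̃` compares `Λ/(r2+d+dH)` with `d·N/(λσ)`, which after clearing
denominators is `R0H > 1`; `S̃` is always positive and `H̃T` has the sign of `H̃`. -/

section EndemicEquilibrium

variable {Λ d N β k : ℝ}

lemma incidence_at_endemic (hβ : β ≠ 0) (hN : N ≠ 0) (H : ℝ) :
    β * (N * k / β) * H / N = k * H := by
  field_simp

lemma susceptible_balance_at_endemic (hk : k ≠ 0) :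
    Λ - d * (N * k / β) - k * (Λ / k - d * N / β) = 0 := by
  field_simp
  ring

lemma endemic_infected_pos_iff (hd : 0 < d) (hN : 0 < N) (hβ : 0 < β) (hk : 0 < k) :
    0 < Λ / k - d * N / β ↔ 1 < Λ * β / (N * d * k) := by
  rw [one_lt_div (by positivity), sub_pos, div_lt_div_iff₀ hβ hk, mul_comm d N]

end EndemicEquilibrium

theorem HIV_endemic_equilibrium_general (Lam d dH r2 ls Nv : ℝ)
    (hd : 0 < d) (hdH : 0 < dH) (hr2 : 0 < r2)
    (hls : 0 < ls) (hNv : 0 < Nv)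
    (St Ht HtT : ℝ)
    (hSt : St = Nv * (r2 + d + dH) / ls)
    (hHt : Ht = Lam / (r2 + d + dH) - d * Nv / ls)
    (hHtT : HtT = r2 * Ht / (d + dH)) :
    (Lam - d * St - ls * St * Ht / Nv = 0 ∧
     ls * St * Ht / Nv - (r2 + d + dH) * Ht = 0 ∧
     r2 * Ht - (d + dH) * HtT = 0) ∧
    (0 < Ht ↔ 1 < Lam * ls / (Nv * d * (r2 + d + dH))) ∧
    ((0 < St ∧ 0 < Ht ∧ 0 < HtT) ↔ 1 < Lam * ls / (Nv * d * (r2 + d + dH))) := by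
  have hk : 0 < r2 + d + dH := by linarith
  have hm : 0 < d + dH := by linarith
  have hHt_iff : 0 < Ht ↔ 1 < Lam * ls / (Nv * d * (r2 + d + dH)) :=
    hHt ▸ endemic_infected_pos_iff hd hNv hls hk
  subst hSt hHtT
  rw [incidence_at_endemic hls.ne' hNv.ne']
  refine ⟨⟨hHt ▸ susceptible_balance_at_endemic hk.ne', sub_self _, ?_⟩, hHt_iff, ?_⟩
  · rw [mul_div_cancel₀ _ hm.ne', sub_self]
  · rw [← hHt_iff]
    exact ⟨fun h => h.2.1, fun h => ⟨by positivity, h, div_pos (mul_pos hr2 h) hm⟩⟩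

/-- Existence of the HIV endemic equilibrium (Theorem 4.3): `(S̃, H̃, H̃T)` satisfies the
steady-state equations, and its components are positive (equivalently `H̃ > 0`) if and only
if `R0H > 1`. -/
theorem HIV_endemic_equilibrium (Lam d dH r2 ls Nv : ℝ)
    (hLam : 0 < Lam) (hd : 0 < d) (hdH : 0 < dH) (hr2 : 0 < r2)
    (hls : 0 < ls) (hNv : 0 < Nv)
    (St Ht HtT : ℝ)
    (hSt : St = Nv * (r2 + d + dH) / ls)
    (hHt : Ht = Lam / (r2 + d + dH) - d * Nv / ls)
    (hHtT : HtT = r2 * Ht / (d + dH)) :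
    (Lam - d * St - ls * St * Ht / Nv = 0 ∧
     ls * St * Ht / Nv - (r2 + d + dH) * Ht = 0 ∧
     r2 * Ht - (d + dH) * HtT = 0) ∧
    (0 < Ht ↔ 1 < Lam * ls / (Nv * d * (r2 + d + dH))) ∧
    ((0 < St ∧ 0 < Ht ∧ 0 < HtT) ↔ 1 < Lam * ls / (Nv * d * (r2 + d + dH))) :=
  HIV_endemic_equilibrium_general Lam d dH r2 ls Nv hd hdH hr2 hls hNv St Ht HtT hSt hHt hHtT
end

section
/- Local stability of the HIV endemic equilibrium (Theorem 4.4): suppose R0H = Λ·λσ/(N·d·(r2+d+dH)) > 1, and let (S̃, H̃, H̃T) be the HIV endemic equilibrium with S̃ = N·(r2+d+dH)/(λσ), H̃ = Λ/(r2+d+dH) − d·N/(λσ) > 0, H̃T = r2·H̃/(d+dH). Then every complex eigenvalue of the Jacobian matrix of the HIV vector field evaluated at (S̃, H̃, H̃T), namely J = [[−d − λσ·H̃/N, −(r2+d+dH), 0], [λσ·H̃/N, 0, 0], [0, r2, −(d+dH)]], has negative real part. -/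
open Polynomial

lemma quad_neg_re_aux (p q : ℝ) (hp : 0 < p) (hq : 0 < q) (μ : ℂ)
    (h : μ^2 + (p:ℂ)*μ + (q:ℂ) = 0) : μ.re < 0 := by
  have h' := h
  rw [Complex.ext_iff] at h'
  obtain ⟨hre, him⟩ := h'
  simp only [pow_two, Complex.add_re, Complex.add_im, Complex.mul_re, Complex.mul_im,
    Complex.ofReal_re, Complex.ofReal_im, Complex.zero_re, Complex.zero_im] at hre him
  set x := μ.re; set y := μ.im
  have him' : y * (2*x + p) = 0 := by ring_nf; ring_nf at him; linarith
  rcases mul_eq_zero.1 him' with hy | hx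
  · by_contra hxn
    push_neg at hxn
    have : x*x - y*y + (p*x) + q > 0 := by rw [hy]; nlinarith
    linarith [hre, this]
  · linarith

/-- Local stability of the HIV endemic equilibrium (Theorem 4.4): when `R0H > 1`, every
eigenvalue of the Jacobian of the HIV vector field at the endemic equilibrium has negative
real part. -/
theorem HIV_endemic_local_stability (Lam d dH r2 ls Nv : ℝ)
    (hLam : 0 < Lam) (hd : 0 < d) (hdH : 0 < dH) (hr2 : 0 < r2)
    (hls : 0 < ls) (hNv : 0 < Nv)
    (hR : 1 < Lam * ls / (Nv * d * (r2 + d + dH)))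
    (St Ht HtT : ℝ)
    (hSt : St = Nv * (r2 + d + dH) / ls)
    (hHt : Ht = Lam / (r2 + d + dH) - d * Nv / ls)
    (hHtpos : 0 < Ht)
    (hHtT : HtT = r2 * Ht / (d + dH)) :
    ∀ μ : ℂ,
      (Matrix.charpoly ((!![-d - ls * Ht / Nv, -(r2 + d + dH), 0;
          ls * Ht / Nv, 0, 0;
          0, r2, -(d + dH)] : Matrix (Fin 3) (Fin 3) ℝ).map Complex.ofReal)).IsRoot μ →
      μ.re < 0 := by
  intro μ h
  set a : ℝ := ls * Ht / Nv with ha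
  have hapos : 0 < a := by positivity
  set b : ℝ := r2 + d + dH with hb
  have hbpos : 0 < b := by positivity
  rw [Matrix.charpoly, Polynomial.IsRoot, Matrix.det_fin_three] at h
  norm_num [Matrix.charmatrix_apply, Matrix.one_apply, Fin.ext_iff, Matrix.map_apply,
    Matrix.diagonal_apply] at h
  -- h : (μ - ↑(-d - a)) * μ * (μ - ↑(-(d+dH))) - ↑(-b) * ↑a * (μ - ↑(-(d+dH))) = 0
  have key : (μ + ((d:ℂ) + dH)) * (μ^2 + ((d:ℂ) + a)*μ + (a:ℂ)*b) = 0 := by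
    push_cast at h ⊢
    linear_combination h
  rcases mul_eq_zero.1 key with h1 | h2
  · have : μ = -((d:ℂ) + dH) := by linear_combination h1
    rw [this]
    simp only [Complex.neg_re, Complex.add_re, Complex.ofReal_re]
    linarith
  · have := quad_neg_re_aux (d + a) (a * b) (by positivity) (by positivity) μ (by
      push_cast
      linear_combination h2)
    exact this
end

section
/- Positive invariance for the HIV submodel: let (S, H, H^T) : [0,∞) → ℝ³ be a continuously differentiable solution of the HIV submodel with N(t) = S+H+H^T and N(t) > 0. If all three components are nonnegative at t = 0 and N(0) ≤ Λ/d, then all three components remain nonnegative and N(t) ≤ Λ/d for every t ≥ 0; that is, the region D2 = {(S, H, H^T) ∈ ℝ₊³ : S+H+H^T ≤ Λ/d} is positively invariant. -/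
/-!
Each of `H`, `S`, `H^T` and `Λ/d - N` satisfies a scalar linear equation `f' = a(t) f + g(t)`
with `a` continuous and forcing term `g ≥ 0`, provided the components solved for earlier are
already known to be nonnegative (in the order `H`, `S`, `H^T`, `Λ/d - N`). For such an equation
`f · exp(-∫ a)` is nondecreasing, so `f(0) ≥ 0` propagates to all `t ≥ 0`.
-/

open Set

theorem exists_hasDerivAt_eq_of_continuousOn_Ici {a : ℝ → ℝ} {t₀ : ℝ}
    (ha : ContinuousOn a (Ici t₀)) :
    ∃ A : ℝ → ℝ, ∀ t ≥ t₀, HasDerivAt A (a t) t := by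
  have hc : Continuous (a ∘ fun s => max s t₀) :=
    ha.comp_continuous (continuous_id.max continuous_const) fun s => le_max_right s t₀
  refine ⟨fun t => ∫ s in t₀..t, a (max s t₀), fun t ht => ?_⟩
  simpa [max_eq_left ht] using (hc.integral_hasStrictDerivAt t₀ t).hasDerivAt

theorem nonneg_of_hasDerivAt_eq_mul_add {f a g : ℝ → ℝ} {t₀ : ℝ}
    (ha : ContinuousOn a (Ici t₀)) (hf : ∀ t ≥ t₀, HasDerivAt f (a t * f t + g t) t)
    (hg : ∀ t ≥ t₀, 0 ≤ g t) (h₀ : 0 ≤ f t₀) : ∀ t ≥ t₀, 0 ≤ f t := by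
  obtain ⟨A, hA⟩ := exists_hasDerivAt_eq_of_continuousOn_Ici ha
  have hderiv : ∀ t ≥ t₀, HasDerivAt (fun s => f s * Real.exp (-A s))
      (g t * Real.exp (-A t)) t := fun t ht =>
    ((hf t ht).mul (hA t ht).neg.exp).congr_deriv (by simp only [Pi.neg_apply]; ring)
  have hmono : MonotoneOn (fun s => f s * Real.exp (-A s)) (Ici t₀) :=
    monotoneOn_of_hasDerivWithinAt_nonneg (convex_Ici t₀) (HasDerivAt.continuousOn hderiv)
      (fun t ht => (hderiv t (interior_subset ht)).hasDerivWithinAt)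
      fun t ht => mul_nonneg (hg t (interior_subset ht)) (Real.exp_pos _).le
  intro t ht
  have hweighted : 0 ≤ f t * Real.exp (-A t) :=
    (mul_nonneg h₀ (Real.exp_pos _).le).trans (hmono self_mem_Ici ht ht)
  exact nonneg_of_mul_nonneg_left hweighted (Real.exp_pos _)

theorem HIV_positive_invariance_general (Lam d dH r2 ls : ℝ)
    (hLam : 0 < Lam) (hd : 0 < d) (hdH : 0 < dH) (hr2 : 0 < r2)
    (S H HT N : ℝ → ℝ)
    (hN : ∀ t, N t = S t + H t + HT t)
    (hNpos : ∀ t ≥ (0 : ℝ), 0 < N t)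
    (hS : ∀ t ≥ (0 : ℝ), HasDerivAt S (Lam - d * S t - ls * S t * H t / N t) t)
    (hH : ∀ t ≥ (0 : ℝ), HasDerivAt H (ls * S t * H t / N t - (r2 + d + dH) * H t) t)
    (hHT : ∀ t ≥ (0 : ℝ), HasDerivAt HT (r2 * H t - (d + dH) * HT t) t)
    (h0 : 0 ≤ S 0 ∧ 0 ≤ H 0 ∧ 0 ≤ HT 0)
    (hN0le : N 0 ≤ Lam / d) :
    ∀ t ≥ (0 : ℝ), (0 ≤ S t ∧ 0 ≤ H t ∧ 0 ≤ HT t) ∧ N t ≤ Lam / d := by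
  obtain rfl : N = fun t => S t + H t + HT t := funext hN
  obtain ⟨hS0, hH0, hHT0⟩ := h0
  have hN_cont : ContinuousOn (fun t => S t + H t + HT t) (Ici 0) :=
    ((HasDerivAt.continuousOn hS).add (HasDerivAt.continuousOn hH)).add
      (HasDerivAt.continuousOn hHT)
  have hS_div_N : ContinuousOn (fun t => S t / (S t + H t + HT t)) (Ici 0) :=
    (HasDerivAt.continuousOn hS).div hN_cont fun t ht => (hNpos t ht).ne'
  have hH_div_N : ContinuousOn (fun t => H t / (S t + H t + HT t)) (Ici 0) :=
    (HasDerivAt.continuousOn hH).div hN_cont fun t ht => (hNpos t ht).ne'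
  have hH_nonneg : ∀ t ≥ (0 : ℝ), 0 ≤ H t :=
    nonneg_of_hasDerivAt_eq_mul_add
      (a := fun t => ls * (S t / (S t + H t + HT t)) - (r2 + d + dH)) (g := fun _ => 0)
      ((continuousOn_const.mul hS_div_N).sub continuousOn_const)
      (fun t ht => (hH t ht).congr_deriv (by ring)) (fun _ _ => le_rfl) hH0
  have hS_nonneg : ∀ t ≥ (0 : ℝ), 0 ≤ S t :=
    nonneg_of_hasDerivAt_eq_mul_add
      (a := fun t => -(d + ls * (H t / (S t + H t + HT t)))) (g := fun _ => Lam)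
      (continuousOn_const.add (continuousOn_const.mul hH_div_N)).neg
      (fun t ht => (hS t ht).congr_deriv (by ring)) (fun _ _ => hLam.le) hS0
  have hHT_nonneg : ∀ t ≥ (0 : ℝ), 0 ≤ HT t :=
    nonneg_of_hasDerivAt_eq_mul_add (a := fun _ => -(d + dH)) (g := fun t => r2 * H t)
      continuousOn_const (fun t ht => (hHT t ht).congr_deriv (by ring))
      (fun t ht => mul_nonneg hr2.le (hH_nonneg t ht)) hHT0
  have hN_gap : ∀ t ≥ (0 : ℝ), 0 ≤ Lam / d - (S t + H t + HT t) :=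
    nonneg_of_hasDerivAt_eq_mul_add (a := fun _ => -d) (g := fun t => dH * (H t + HT t))
      continuousOn_const
      (fun t ht => (((hS t ht).add (hH t ht)).add (hHT t ht)).const_sub (Lam / d)
        |>.congr_deriv (by field_simp; ring))
      (fun t ht => mul_nonneg hdH.le (add_nonneg (hH_nonneg t ht) (hHT_nonneg t ht)))
      (sub_nonneg.mpr hN0le)
  exact fun t ht =>
    ⟨⟨hS_nonneg t ht, hH_nonneg t ht, hHT_nonneg t ht⟩, sub_nonneg.mp (hN_gap t ht)⟩

/-- Positive invariance of the region `D2` for the HIV submodel: nonnegativity of all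
components is preserved and the total population stays below `Λ/d`. -/
theorem HIV_positive_invariance (Lam d dH r2 ls : ℝ)
    (hLam : 0 < Lam) (hd : 0 < d) (hdH : 0 < dH) (hr2 : 0 < r2) (hls : 0 < ls)
    (S H HT N : ℝ → ℝ)
    (hN : ∀ t, N t = S t + H t + HT t)
    (hNpos : ∀ t ≥ (0 : ℝ), 0 < N t)
    (hS : ∀ t ≥ (0 : ℝ), HasDerivAt S (Lam - d * S t - ls * S t * H t / N t) t)
    (hH : ∀ t ≥ (0 : ℝ), HasDerivAt H (ls * S t * H t / N t - (r2 + d + dH) * H t) t)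
    (hHT : ∀ t ≥ (0 : ℝ), HasDerivAt HT (r2 * H t - (d + dH) * HT t) t)
    (h0 : 0 ≤ S 0 ∧ 0 ≤ H 0 ∧ 0 ≤ HT 0)
    (hN0le : N 0 ≤ Lam / d) :
    ∀ t ≥ (0 : ℝ), (0 ≤ S t ∧ 0 ≤ H t ∧ 0 ≤ HT t) ∧ N t ≤ Lam / d :=
  HIV_positive_invariance_general Lam d dH r2 ls hLam hd hdH hr2 S H HT N hN hNpos hS hH hHT h0
    hN0le
end

section
/- Local stability of the disease-free equilibrium of the full model (Theorem 5.1): let J₀ be the 12×12 Jacobian matrix of the full HIV–TB vector field (with N held as a fixed positive constant) evaluated at the disease-free equilibrium E0 = (Λ/d, 0, 0, 0, 0, 0, 0, 0, 0, 0, 0, 0). Define R0T = βe·Λ·k1/(N·d·(d+r+dT)·(d+k1)) and R0H = Λ·λσ/(N·d·(r2+d+dH)). If max{R0T, R0H} < 1, then every complex eigenvalue of J₀ has negative real part; if max{R0T, R0H} > 1, then J₀ has an eigenvalue with positive real part. -/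
set_option maxHeartbeats 1000000
set_option maxRecDepth 100000
set_option linter.unusedVariables false
set_option linter.deprecated false

lemma dstep1 (d0 s1 s5 s6 s7 s8 s9 s11 d1 q1 d2 q3 q2 d3 q5 q4 d4 q6 d5 q10 q9 q7 q8 d6 q11 d7 q12 d8 q13 d9 q15 d10 q14 q16 d11 : ℂ) :
    (!![d0, s1, 0, 0, 0, s5, s6, s7, s8, s9, 0, s11;
      0, d1, 0, 0, 0, 0, 0, 0, 0, 0, 0, q1;
      0, 0, d2, q3, 0, q2, 0, 0, 0, 0, 0, 0;
      0, 0, 0, d3, q5, 0, q4, 0, 0, 0, 0, 0;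
      0, 0, 0, 0, d4, 0, 0, q6, 0, 0, 0, 0;
      0, 0, 0, 0, 0, d5, q10, q9, q7, q8, 0, 0;
      0, 0, 0, 0, 0, 0, d6, q11, 0, 0, 0, 0;
      0, 0, 0, 0, 0, 0, 0, d7, 0, q12, 0, 0;
      0, 0, 0, 0, 0, 0, 0, 0, d8, 0, 0, 0;
      0, 0, 0, 0, 0, 0, 0, 0, q13, d9, 0, 0;
      0, 0, 0, 0, 0, 0, 0, 0, 0, q15, d10, q14;
      0, 0, 0, 0, 0, 0, 0, 0, 0, 0, q16, d11] : Matrix (Fin 12) (Fin 12) ℂ).det = d0 * (!![d1, 0, 0, 0, 0, 0, 0, 0, 0, 0, q1;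
      0, d2, q3, 0, q2, 0, 0, 0, 0, 0, 0;
      0, 0, d3, q5, 0, q4, 0, 0, 0, 0, 0;
      0, 0, 0, d4, 0, 0, q6, 0, 0, 0, 0;
      0, 0, 0, 0, d5, q10, q9, q7, q8, 0, 0;
      0, 0, 0, 0, 0, d6, q11, 0, 0, 0, 0;
      0, 0, 0, 0, 0, 0, d7, 0, q12, 0, 0;
      0, 0, 0, 0, 0, 0, 0, d8, 0, 0, 0;
      0, 0, 0, 0, 0, 0, 0, q13, d9, 0, 0;
      0, 0, 0, 0, 0, 0, 0, 0, q15, d10, q14;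
      0, 0, 0, 0, 0, 0, 0, 0, 0, q16, d11] : Matrix (Fin 11) (Fin 11) ℂ).det := by
  rw [Matrix.det_succ_column_zero]
  simp only [Fin.sum_univ_succ, Fin.sum_univ_zero, Matrix.cons_val', Matrix.cons_val_zero, Matrix.cons_val_one, Matrix.head_cons, Matrix.head_fin_const, Matrix.empty_val', Matrix.cons_val_fin_one, Matrix.of_apply, Fin.val_zero, Fin.val_succ, pow_zero, pow_succ, zero_mul, mul_zero, add_zero, zero_add, neg_zero, one_mul, mul_one, neg_mul, neg_neg, Matrix.cons_val_succ]
  refine congrArg (d0 * ·) (congrArg Matrix.det ?_)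
  ext i j
  fin_cases i <;> fin_cases j <;> rfl

lemma dstep2 (d1 q1 d2 q3 q2 d3 q5 q4 d4 q6 d5 q10 q9 q7 q8 d6 q11 d7 q12 d8 q13 d9 q15 d10 q14 q16 d11 : ℂ) :
    (!![d1, 0, 0, 0, 0, 0, 0, 0, 0, 0, q1;
      0, d2, q3, 0, q2, 0, 0, 0, 0, 0, 0;
      0, 0, d3, q5, 0, q4, 0, 0, 0, 0, 0;
      0, 0, 0, d4, 0, 0, q6, 0, 0, 0, 0;
      0, 0, 0, 0, d5, q10, q9, q7, q8, 0, 0;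
      0, 0, 0, 0, 0, d6, q11, 0, 0, 0, 0;
      0, 0, 0, 0, 0, 0, d7, 0, q12, 0, 0;
      0, 0, 0, 0, 0, 0, 0, d8, 0, 0, 0;
      0, 0, 0, 0, 0, 0, 0, q13, d9, 0, 0;
      0, 0, 0, 0, 0, 0, 0, 0, q15, d10, q14;
      0, 0, 0, 0, 0, 0, 0, 0, 0, q16, d11] : Matrix (Fin 11) (Fin 11) ℂ).det = d1 * (!![d2, q3, 0, q2, 0, 0, 0, 0, 0, 0;
      0, d3, q5, 0, q4, 0, 0, 0, 0, 0;
      0, 0, d4, 0, 0, q6, 0, 0, 0, 0;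
      0, 0, 0, d5, q10, q9, q7, q8, 0, 0;
      0, 0, 0, 0, d6, q11, 0, 0, 0, 0;
      0, 0, 0, 0, 0, d7, 0, q12, 0, 0;
      0, 0, 0, 0, 0, 0, d8, 0, 0, 0;
      0, 0, 0, 0, 0, 0, q13, d9, 0, 0;
      0, 0, 0, 0, 0, 0, 0, q15, d10, q14;
      0, 0, 0, 0, 0, 0, 0, 0, q16, d11] : Matrix (Fin 10) (Fin 10) ℂ).det := by
  rw [Matrix.det_succ_column_zero]
  simp only [Fin.sum_univ_succ, Fin.sum_univ_zero, Matrix.cons_val', Matrix.cons_val_zero, Matrix.cons_val_one, Matrix.head_cons, Matrix.head_fin_const, Matrix.empty_val', Matrix.cons_val_fin_one, Matrix.of_apply, Fin.val_zero, Fin.val_succ, pow_zero, pow_succ, zero_mul, mul_zero, add_zero, zero_add, neg_zero, one_mul, mul_one, neg_mul, neg_neg, Matrix.cons_val_succ]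
  refine congrArg (d1 * ·) (congrArg Matrix.det ?_)
  ext i j
  fin_cases i <;> fin_cases j <;> rfl

lemma dstep3 (d2 q3 q2 d3 q5 q4 d4 q6 d5 q10 q9 q7 q8 d6 q11 d7 q12 d8 q13 d9 q15 d10 q14 q16 d11 : ℂ) :
    (!![d2, q3, 0, q2, 0, 0, 0, 0, 0, 0;
      0, d3, q5, 0, q4, 0, 0, 0, 0, 0;
      0, 0, d4, 0, 0, q6, 0, 0, 0, 0;
      0, 0, 0, d5, q10, q9, q7, q8, 0, 0;
      0, 0, 0, 0, d6, q11, 0, 0, 0, 0;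
      0, 0, 0, 0, 0, d7, 0, q12, 0, 0;
      0, 0, 0, 0, 0, 0, d8, 0, 0, 0;
      0, 0, 0, 0, 0, 0, q13, d9, 0, 0;
      0, 0, 0, 0, 0, 0, 0, q15, d10, q14;
      0, 0, 0, 0, 0, 0, 0, 0, q16, d11] : Matrix (Fin 10) (Fin 10) ℂ).det = d2 * (!![d3, q5, 0, q4, 0, 0, 0, 0, 0;
      0, d4, 0, 0, q6, 0, 0, 0, 0;
      0, 0, d5, q10, q9, q7, q8, 0, 0;
      0, 0, 0, d6, q11, 0, 0, 0, 0;
      0, 0, 0, 0, d7, 0, q12, 0, 0;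
      0, 0, 0, 0, 0, d8, 0, 0, 0;
      0, 0, 0, 0, 0, q13, d9, 0, 0;
      0, 0, 0, 0, 0, 0, q15, d10, q14;
      0, 0, 0, 0, 0, 0, 0, q16, d11] : Matrix (Fin 9) (Fin 9) ℂ).det := by
  rw [Matrix.det_succ_column_zero]
  simp only [Fin.sum_univ_succ, Fin.sum_univ_zero, Matrix.cons_val', Matrix.cons_val_zero, Matrix.cons_val_one, Matrix.head_cons, Matrix.head_fin_const, Matrix.empty_val', Matrix.cons_val_fin_one, Matrix.of_apply, Fin.val_zero, Fin.val_succ, pow_zero, pow_succ, zero_mul, mul_zero, add_zero, zero_add, neg_zero, one_mul, mul_one, neg_mul, neg_neg, Matrix.cons_val_succ]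
  refine congrArg (d2 * ·) (congrArg Matrix.det ?_)
  ext i j
  fin_cases i <;> fin_cases j <;> rfl

lemma dstep4 (d3 q5 q4 d4 q6 d5 q10 q9 q7 q8 d6 q11 d7 q12 d8 q13 d9 q15 d10 q14 q16 d11 : ℂ) :
    (!![d3, q5, 0, q4, 0, 0, 0, 0, 0;
      0, d4, 0, 0, q6, 0, 0, 0, 0;
      0, 0, d5, q10, q9, q7, q8, 0, 0;
      0, 0, 0, d6, q11, 0, 0, 0, 0;
      0, 0, 0, 0, d7, 0, q12, 0, 0;
      0, 0, 0, 0, 0, d8, 0, 0, 0;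
      0, 0, 0, 0, 0, q13, d9, 0, 0;
      0, 0, 0, 0, 0, 0, q15, d10, q14;
      0, 0, 0, 0, 0, 0, 0, q16, d11] : Matrix (Fin 9) (Fin 9) ℂ).det = d3 * (!![d4, 0, 0, q6, 0, 0, 0, 0;
      0, d5, q10, q9, q7, q8, 0, 0;
      0, 0, d6, q11, 0, 0, 0, 0;
      0, 0, 0, d7, 0, q12, 0, 0;
      0, 0, 0, 0, d8, 0, 0, 0;
      0, 0, 0, 0, q13, d9, 0, 0;
      0, 0, 0, 0, 0, q15, d10, q14;
      0, 0, 0, 0, 0, 0, q16, d11] : Matrix (Fin 8) (Fin 8) ℂ).det := by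
  rw [Matrix.det_succ_column_zero]
  simp only [Fin.sum_univ_succ, Fin.sum_univ_zero, Matrix.cons_val', Matrix.cons_val_zero, Matrix.cons_val_one, Matrix.head_cons, Matrix.head_fin_const, Matrix.empty_val', Matrix.cons_val_fin_one, Matrix.of_apply, Fin.val_zero, Fin.val_succ, pow_zero, pow_succ, zero_mul, mul_zero, add_zero, zero_add, neg_zero, one_mul, mul_one, neg_mul, neg_neg, Matrix.cons_val_succ]
  refine congrArg (d3 * ·) (congrArg Matrix.det ?_)
  ext i j
  fin_cases i <;> fin_cases j <;> rfl

lemma dstep5 (d4 q6 d5 q10 q9 q7 q8 d6 q11 d7 q12 d8 q13 d9 q15 d10 q14 q16 d11 : ℂ) :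
    (!![d4, 0, 0, q6, 0, 0, 0, 0;
      0, d5, q10, q9, q7, q8, 0, 0;
      0, 0, d6, q11, 0, 0, 0, 0;
      0, 0, 0, d7, 0, q12, 0, 0;
      0, 0, 0, 0, d8, 0, 0, 0;
      0, 0, 0, 0, q13, d9, 0, 0;
      0, 0, 0, 0, 0, q15, d10, q14;
      0, 0, 0, 0, 0, 0, q16, d11] : Matrix (Fin 8) (Fin 8) ℂ).det = d4 * (!![d5, q10, q9, q7, q8, 0, 0;
      0, d6, q11, 0, 0, 0, 0;
      0, 0, d7, 0, q12, 0, 0;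
      0, 0, 0, d8, 0, 0, 0;
      0, 0, 0, q13, d9, 0, 0;
      0, 0, 0, 0, q15, d10, q14;
      0, 0, 0, 0, 0, q16, d11] : Matrix (Fin 7) (Fin 7) ℂ).det := by
  rw [Matrix.det_succ_column_zero]
  simp only [Fin.sum_univ_succ, Fin.sum_univ_zero, Matrix.cons_val', Matrix.cons_val_zero, Matrix.cons_val_one, Matrix.head_cons, Matrix.head_fin_const, Matrix.empty_val', Matrix.cons_val_fin_one, Matrix.of_apply, Fin.val_zero, Fin.val_succ, pow_zero, pow_succ, zero_mul, mul_zero, add_zero, zero_add, neg_zero, one_mul, mul_one, neg_mul, neg_neg, Matrix.cons_val_succ]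
  refine congrArg (d4 * ·) (congrArg Matrix.det ?_)
  ext i j
  fin_cases i <;> fin_cases j <;> rfl

lemma dstep6 (d5 q10 q9 q7 q8 d6 q11 d7 q12 d8 q13 d9 q15 d10 q14 q16 d11 : ℂ) :
    (!![d5, q10, q9, q7, q8, 0, 0;
      0, d6, q11, 0, 0, 0, 0;
      0, 0, d7, 0, q12, 0, 0;
      0, 0, 0, d8, 0, 0, 0;
      0, 0, 0, q13, d9, 0, 0;
      0, 0, 0, 0, q15, d10, q14;
      0, 0, 0, 0, 0, q16, d11] : Matrix (Fin 7) (Fin 7) ℂ).det = d5 * (!![d6, q11, 0, 0, 0, 0;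
      0, d7, 0, q12, 0, 0;
      0, 0, d8, 0, 0, 0;
      0, 0, q13, d9, 0, 0;
      0, 0, 0, q15, d10, q14;
      0, 0, 0, 0, q16, d11] : Matrix (Fin 6) (Fin 6) ℂ).det := by
  rw [Matrix.det_succ_column_zero]
  simp only [Fin.sum_univ_succ, Fin.sum_univ_zero, Matrix.cons_val', Matrix.cons_val_zero, Matrix.cons_val_one, Matrix.head_cons, Matrix.head_fin_const, Matrix.empty_val', Matrix.cons_val_fin_one, Matrix.of_apply, Fin.val_zero, Fin.val_succ, pow_zero, pow_succ, zero_mul, mul_zero, add_zero, zero_add, neg_zero, one_mul, mul_one, neg_mul, neg_neg, Matrix.cons_val_succ]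
  refine congrArg (d5 * ·) (congrArg Matrix.det ?_)
  ext i j
  fin_cases i <;> fin_cases j <;> rfl

lemma dstep7 (d6 q11 d7 q12 d8 q13 d9 q15 d10 q14 q16 d11 : ℂ) :
    (!![d6, q11, 0, 0, 0, 0;
      0, d7, 0, q12, 0, 0;
      0, 0, d8, 0, 0, 0;
      0, 0, q13, d9, 0, 0;
      0, 0, 0, q15, d10, q14;
      0, 0, 0, 0, q16, d11] : Matrix (Fin 6) (Fin 6) ℂ).det = d6 * (!![d7, 0, q12, 0, 0;
      0, d8, 0, 0, 0;
      0, q13, d9, 0, 0;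
      0, 0, q15, d10, q14;
      0, 0, 0, q16, d11] : Matrix (Fin 5) (Fin 5) ℂ).det := by
  rw [Matrix.det_succ_column_zero]
  simp only [Fin.sum_univ_succ, Fin.sum_univ_zero, Matrix.cons_val', Matrix.cons_val_zero, Matrix.cons_val_one, Matrix.head_cons, Matrix.head_fin_const, Matrix.empty_val', Matrix.cons_val_fin_one, Matrix.of_apply, Fin.val_zero, Fin.val_succ, pow_zero, pow_succ, zero_mul, mul_zero, add_zero, zero_add, neg_zero, one_mul, mul_one, neg_mul, neg_neg, Matrix.cons_val_succ]
  refine congrArg (d6 * ·) (congrArg Matrix.det ?_)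
  ext i j
  fin_cases i <;> fin_cases j <;> rfl

lemma dstep8 (d7 q12 d8 q13 d9 q15 d10 q14 q16 d11 : ℂ) :
    (!![d7, 0, q12, 0, 0;
      0, d8, 0, 0, 0;
      0, q13, d9, 0, 0;
      0, 0, q15, d10, q14;
      0, 0, 0, q16, d11] : Matrix (Fin 5) (Fin 5) ℂ).det = d7 * (!![d8, 0, 0, 0;
      q13, d9, 0, 0;
      0, q15, d10, q14;
      0, 0, q16, d11] : Matrix (Fin 4) (Fin 4) ℂ).det := by
  rw [Matrix.det_succ_column_zero]
  simp only [Fin.sum_univ_succ, Fin.sum_univ_zero, Matrix.cons_val', Matrix.cons_val_zero, Matrix.cons_val_one, Matrix.head_cons, Matrix.head_fin_const, Matrix.empty_val', Matrix.cons_val_fin_one, Matrix.of_apply, Fin.val_zero, Fin.val_succ, pow_zero, pow_succ, zero_mul, mul_zero, add_zero, zero_add, neg_zero, one_mul, mul_one, neg_mul, neg_neg, Matrix.cons_val_succ]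
  refine congrArg (d7 * ·) (congrArg Matrix.det ?_)
  ext i j
  fin_cases i <;> fin_cases j <;> rfl

lemma dstep9 (d8 q13 d9 q15 d10 q14 q16 d11 : ℂ) :
    (!![d8, 0, 0, 0;
      q13, d9, 0, 0;
      0, q15, d10, q14;
      0, 0, q16, d11] : Matrix (Fin 4) (Fin 4) ℂ).det = d8 * (!![d9, 0, 0;
      q15, d10, q14;
      0, q16, d11] : Matrix (Fin 3) (Fin 3) ℂ).det := by
  rw [Matrix.det_succ_row_zero]
  simp only [Fin.sum_univ_succ, Fin.sum_univ_zero, Matrix.cons_val', Matrix.cons_val_zero, Matrix.cons_val_one, Matrix.head_cons, Matrix.head_fin_const, Matrix.empty_val', Matrix.cons_val_fin_one, Matrix.of_apply, Fin.val_zero, Fin.val_succ, pow_zero, pow_succ, zero_mul, mul_zero, add_zero, zero_add, neg_zero, one_mul, mul_one, neg_mul, neg_neg, Matrix.cons_val_succ]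
  refine congrArg (d8 * ·) (congrArg Matrix.det ?_)
  ext i j
  fin_cases i <;> fin_cases j <;> rfl

lemma dstep_fin (d9 q15 d10 q14 q16 d11 : ℂ) :
    (!![d9, 0, 0;
      q15, d10, q14;
      0, q16, d11] : Matrix (Fin 3) (Fin 3) ℂ).det = d9 * (d10 * d11 - q14 * q16) := by
  rw [Matrix.det_fin_three]
  simp
  ring

lemma det12 (d0 s1 s5 s6 s7 s8 s9 s11 d1 q1 d2 q3 q2 d3 q5 q4 d4 q6 d5 q10 q9 q7 q8 d6 q11 d7 q12 d8 q13 d9 q15 d10 q14 q16 d11 : ℂ) :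
    (!![d0, s1, 0, 0, 0, s5, s6, s7, s8, s9, 0, s11;
      0, d1, 0, 0, 0, 0, 0, 0, 0, 0, 0, q1;
      0, 0, d2, q3, 0, q2, 0, 0, 0, 0, 0, 0;
      0, 0, 0, d3, q5, 0, q4, 0, 0, 0, 0, 0;
      0, 0, 0, 0, d4, 0, 0, q6, 0, 0, 0, 0;
      0, 0, 0, 0, 0, d5, q10, q9, q7, q8, 0, 0;
      0, 0, 0, 0, 0, 0, d6, q11, 0, 0, 0, 0;
      0, 0, 0, 0, 0, 0, 0, d7, 0, q12, 0, 0;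
      0, 0, 0, 0, 0, 0, 0, 0, d8, 0, 0, 0;
      0, 0, 0, 0, 0, 0, 0, 0, q13, d9, 0, 0;
      0, 0, 0, 0, 0, 0, 0, 0, 0, q15, d10, q14;
      0, 0, 0, 0, 0, 0, 0, 0, 0, 0, q16, d11] : Matrix (Fin 12) (Fin 12) ℂ).det
      = d0 * d1 * d2 * d3 * d4 * d5 * d6 * d7 * d8 * d9 * (d10 * d11 - q14 * q16) := by
  rw [dstep1, dstep2, dstep3, dstep4, dstep5, dstep6, dstep7, dstep8, dstep9, dstep_fin]
  ring

lemma finv_3_2 : (2 : Fin 3) = Fin.succ (1 : Fin 2) := by decide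
lemma finv_4_2 : (2 : Fin 4) = Fin.succ (1 : Fin 3) := by decide
lemma finv_4_3 : (3 : Fin 4) = Fin.succ (2 : Fin 3) := by decide
lemma finv_5_2 : (2 : Fin 5) = Fin.succ (1 : Fin 4) := by decide
lemma finv_5_3 : (3 : Fin 5) = Fin.succ (2 : Fin 4) := by decide
lemma finv_5_4 : (4 : Fin 5) = Fin.succ (3 : Fin 4) := by decide
lemma finv_6_2 : (2 : Fin 6) = Fin.succ (1 : Fin 5) := by decide
lemma finv_6_3 : (3 : Fin 6) = Fin.succ (2 : Fin 5) := by decide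
lemma finv_6_4 : (4 : Fin 6) = Fin.succ (3 : Fin 5) := by decide
lemma finv_6_5 : (5 : Fin 6) = Fin.succ (4 : Fin 5) := by decide
lemma finv_7_2 : (2 : Fin 7) = Fin.succ (1 : Fin 6) := by decide
lemma finv_7_3 : (3 : Fin 7) = Fin.succ (2 : Fin 6) := by decide
lemma finv_7_4 : (4 : Fin 7) = Fin.succ (3 : Fin 6) := by decide
lemma finv_7_5 : (5 : Fin 7) = Fin.succ (4 : Fin 6) := by decide
lemma finv_7_6 : (6 : Fin 7) = Fin.succ (5 : Fin 6) := by decide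
lemma finv_8_2 : (2 : Fin 8) = Fin.succ (1 : Fin 7) := by decide
lemma finv_8_3 : (3 : Fin 8) = Fin.succ (2 : Fin 7) := by decide
lemma finv_8_4 : (4 : Fin 8) = Fin.succ (3 : Fin 7) := by decide
lemma finv_8_5 : (5 : Fin 8) = Fin.succ (4 : Fin 7) := by decide
lemma finv_8_6 : (6 : Fin 8) = Fin.succ (5 : Fin 7) := by decide
lemma finv_8_7 : (7 : Fin 8) = Fin.succ (6 : Fin 7) := by decide
lemma finv_9_2 : (2 : Fin 9) = Fin.succ (1 : Fin 8) := by decide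
lemma finv_9_3 : (3 : Fin 9) = Fin.succ (2 : Fin 8) := by decide
lemma finv_9_4 : (4 : Fin 9) = Fin.succ (3 : Fin 8) := by decide
lemma finv_9_5 : (5 : Fin 9) = Fin.succ (4 : Fin 8) := by decide
lemma finv_9_6 : (6 : Fin 9) = Fin.succ (5 : Fin 8) := by decide
lemma finv_9_7 : (7 : Fin 9) = Fin.succ (6 : Fin 8) := by decide
lemma finv_9_8 : (8 : Fin 9) = Fin.succ (7 : Fin 8) := by decide
lemma finv_10_2 : (2 : Fin 10) = Fin.succ (1 : Fin 9) := by decide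
lemma finv_10_3 : (3 : Fin 10) = Fin.succ (2 : Fin 9) := by decide
lemma finv_10_4 : (4 : Fin 10) = Fin.succ (3 : Fin 9) := by decide
lemma finv_10_5 : (5 : Fin 10) = Fin.succ (4 : Fin 9) := by decide
lemma finv_10_6 : (6 : Fin 10) = Fin.succ (5 : Fin 9) := by decide
lemma finv_10_7 : (7 : Fin 10) = Fin.succ (6 : Fin 9) := by decide
lemma finv_10_8 : (8 : Fin 10) = Fin.succ (7 : Fin 9) := by decide
lemma finv_10_9 : (9 : Fin 10) = Fin.succ (8 : Fin 9) := by decide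
lemma finv_11_2 : (2 : Fin 11) = Fin.succ (1 : Fin 10) := by decide
lemma finv_11_3 : (3 : Fin 11) = Fin.succ (2 : Fin 10) := by decide
lemma finv_11_4 : (4 : Fin 11) = Fin.succ (3 : Fin 10) := by decide
lemma finv_11_5 : (5 : Fin 11) = Fin.succ (4 : Fin 10) := by decide
lemma finv_11_6 : (6 : Fin 11) = Fin.succ (5 : Fin 10) := by decide
lemma finv_11_7 : (7 : Fin 11) = Fin.succ (6 : Fin 10) := by decide
lemma finv_11_8 : (8 : Fin 11) = Fin.succ (7 : Fin 10) := by decide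
lemma finv_11_9 : (9 : Fin 11) = Fin.succ (8 : Fin 10) := by decide
lemma finv_11_10 : (10 : Fin 11) = Fin.succ (9 : Fin 10) := by decide
lemma finv_12_2 : (2 : Fin 12) = Fin.succ (1 : Fin 11) := by decide
lemma finv_12_3 : (3 : Fin 12) = Fin.succ (2 : Fin 11) := by decide
lemma finv_12_4 : (4 : Fin 12) = Fin.succ (3 : Fin 11) := by decide
lemma finv_12_5 : (5 : Fin 12) = Fin.succ (4 : Fin 11) := by decide
lemma finv_12_6 : (6 : Fin 12) = Fin.succ (5 : Fin 11) := by decide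
lemma finv_12_7 : (7 : Fin 12) = Fin.succ (6 : Fin 11) := by decide
lemma finv_12_8 : (8 : Fin 12) = Fin.succ (7 : Fin 11) := by decide
lemma finv_12_9 : (9 : Fin 12) = Fin.succ (8 : Fin 11) := by decide
lemma finv_12_10 : (10 : Fin 12) = Fin.succ (9 : Fin 11) := by decide
lemma finv_12_11 : (11 : Fin 12) = Fin.succ (10 : Fin 11) := by decide


/-- Jacobian of the full HIV–TB vector field (with total population held as the fixed
positive constant `Nv`) at the disease-free equilibrium
`E0 = (Λ/d, 0, 0, 0, 0, 0, 0, 0, 0, 0, 0, 0)`, with state ordering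
`(S, T_L, T_I, H, H_L, C, C1, C2, C1T, C2T, HT, T_T)` and `al = γ·ρ1/(ρ1+ρ2)`. -/
noncomputable def fullJacDFE (Lam d dT dH dHT k1 k2 r r1 r2 r3 p1 p2 e1 e2 g al be ls Nv : ℝ) :
    Matrix (Fin 12) (Fin 12) ℝ :=
  !![-d, 0, -(be * Lam / (Nv * d)), -(ls * Lam / (Nv * d)), -(ls * Lam / (Nv * d)),
       -((be + ls) * Lam / (Nv * d)), -(ls * Lam / (Nv * d)), -(ls * Lam / (Nv * d)),
       0, 0, 0, r1;
     0, -(d + k1), be * Lam / (Nv * d), 0, 0, be * Lam / (Nv * d), 0, 0, 0, 0, 0, 0;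
     0, k1, -(d + dT + r), 0, 0, 0, 0, 0, 0, 0, 0, 0;
     0, 0, 0, ls * Lam / (Nv * d) - (r2 + d + dH), ls * Lam / (Nv * d), ls * Lam / (Nv * d),
       ls * Lam / (Nv * d), ls * Lam / (Nv * d) + p2, 0, 0, 0, 0;
     0, 0, 0, 0, -(k2 + d + dH), 0, 0, 0, 0, 0, 0, 0;
     0, 0, 0, 0, k2, -(d + dT + dH + r3), 0, 0, 0, 0, 0, 0;
     0, 0, 0, 0, 0, r3, -(p1 + d + dH + e1), 0, 0, 0, 0, 0;
     0, 0, 0, 0, 0, 0, p1, -(p2 + d + dH + e2), 0, 0, 0, 0;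
     0, 0, 0, 0, 0, 0, e1, 0, -(p1 + d + dH + g * dHT), 0, 0, 0;
     0, 0, 0, 0, 0, 0, 0, e2, p1, -(d + dH + al * dHT), 0, 0;
     0, 0, 0, r2, 0, 0, 0, 0, 0, p2, -(d + dH), 0;
     0, 0, r, 0, 0, 0, 0, 0, 0, 0, 0, -(r1 + d + dT)]

def wperm : Equiv.Perm (Fin 12) :=
  ⟨![0,11,10,9,8,3,7,6,4,5,1,2], ![0,10,11,5,8,9,7,6,4,3,2,1],
    by decide, by decide⟩

lemma one12 : (1 : Matrix (Fin 12) (Fin 12) ℂ) = !![1, 0, 0, 0, 0, 0, 0, 0, 0, 0, 0, 0;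
      0, 1, 0, 0, 0, 0, 0, 0, 0, 0, 0, 0;
      0, 0, 1, 0, 0, 0, 0, 0, 0, 0, 0, 0;
      0, 0, 0, 1, 0, 0, 0, 0, 0, 0, 0, 0;
      0, 0, 0, 0, 1, 0, 0, 0, 0, 0, 0, 0;
      0, 0, 0, 0, 0, 1, 0, 0, 0, 0, 0, 0;
      0, 0, 0, 0, 0, 0, 1, 0, 0, 0, 0, 0;
      0, 0, 0, 0, 0, 0, 0, 1, 0, 0, 0, 0;
      0, 0, 0, 0, 0, 0, 0, 0, 1, 0, 0, 0;
      0, 0, 0, 0, 0, 0, 0, 0, 0, 1, 0, 0;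
      0, 0, 0, 0, 0, 0, 0, 0, 0, 0, 1, 0;
      0, 0, 0, 0, 0, 0, 0, 0, 0, 0, 0, 1] := by
  ext i j
  fin_cases i <;> fin_cases j <;> rfl

lemma perm_eq (Lam d dT dH dHT k1 k2 r r1 r2 r3 p1 p2 e1 e2 g al be ls Nv : ℝ) (μ : ℂ) :
    ((μ • (1 : Matrix (Fin 12) (Fin 12) ℂ) -
        (fullJacDFE Lam d dT dH dHT k1 k2 r r1 r2 r3 p1 p2 e1 e2 g al be ls Nv).map Complex.ofReal).submatrix wperm wperm)
    = (!![μ - ((-d : ℝ) : ℂ), -((r1 : ℝ) : ℂ), 0, 0, 0, -((-(ls * Lam / (Nv * d)) : ℝ) : ℂ), -((-(ls * Lam / (Nv * d)) : ℝ) : ℂ), -((-(ls * Lam / (Nv * d)) : ℝ) : ℂ), -((-(ls * Lam / (Nv * d)) : ℝ) : ℂ), -((-((be + ls) * Lam / (Nv * d)) : ℝ) : ℂ), 0, -((-(be * Lam / (Nv * d)) : ℝ) : ℂ);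
      0, μ - ((-(r1 + d + dT) : ℝ) : ℂ), 0, 0, 0, 0, 0, 0, 0, 0, 0, -((r : ℝ) : ℂ);
      0, 0, μ - ((-(d + dH) : ℝ) : ℂ), -((p2 : ℝ) : ℂ), 0, -((r2 : ℝ) : ℂ), 0, 0, 0, 0, 0, 0;
      0, 0, 0, μ - ((-(d + dH + al * dHT) : ℝ) : ℂ), -((p1 : ℝ) : ℂ), 0, -((e2 : ℝ) : ℂ), 0, 0, 0, 0, 0;
      0, 0, 0, 0, μ - ((-(p1 + d + dH + g * dHT) : ℝ) : ℂ), 0, 0, -((e1 : ℝ) : ℂ), 0, 0, 0, 0;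
      0, 0, 0, 0, 0, μ - ((ls * Lam / (Nv * d) - (r2 + d + dH) : ℝ) : ℂ), -((ls * Lam / (Nv * d) + p2 : ℝ) : ℂ), -((ls * Lam / (Nv * d) : ℝ) : ℂ), -((ls * Lam / (Nv * d) : ℝ) : ℂ), -((ls * Lam / (Nv * d) : ℝ) : ℂ), 0, 0;
      0, 0, 0, 0, 0, 0, μ - ((-(p2 + d + dH + e2) : ℝ) : ℂ), -((p1 : ℝ) : ℂ), 0, 0, 0, 0;
      0, 0, 0, 0, 0, 0, 0, μ - ((-(p1 + d + dH + e1) : ℝ) : ℂ), 0, -((r3 : ℝ) : ℂ), 0, 0;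
      0, 0, 0, 0, 0, 0, 0, 0, μ - ((-(k2 + d + dH) : ℝ) : ℂ), 0, 0, 0;
      0, 0, 0, 0, 0, 0, 0, 0, -((k2 : ℝ) : ℂ), μ - ((-(d + dT + dH + r3) : ℝ) : ℂ), 0, 0;
      0, 0, 0, 0, 0, 0, 0, 0, 0, -((be * Lam / (Nv * d) : ℝ) : ℂ), μ - ((-(d + k1) : ℝ) : ℂ), -((be * Lam / (Nv * d) : ℝ) : ℂ);
      0, 0, 0, 0, 0, 0, 0, 0, 0, 0, -((k1 : ℝ) : ℂ), μ - ((-(d + dT + r) : ℝ) : ℂ)] : Matrix (Fin 12) (Fin 12) ℂ) := by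
  rw [one12, ← Matrix.ext_iff]
  simp (config := { maxSteps := 10000000 }) only [Fin.forall_fin_succ, Fin.forall_fin_zero_pi, Matrix.submatrix_apply, wperm,
    Equiv.coe_fn_mk, fullJacDFE, Matrix.map_apply, Matrix.sub_apply, Matrix.smul_apply,
    smul_eq_mul,
    Matrix.cons_val', Matrix.cons_val_zero, Matrix.cons_val_one,
    Matrix.head_cons, Matrix.head_fin_const, Matrix.empty_val', Matrix.cons_val_fin_one,
    Matrix.of_apply, Matrix.cons_val_succ, Matrix.vecHead, Matrix.vecTail,
    finv_3_2, finv_4_2, finv_4_3, finv_5_2, finv_5_3, finv_5_4, finv_6_2, finv_6_3, finv_6_4, finv_6_5, finv_7_2, finv_7_3, finv_7_4, finv_7_5, finv_7_6, finv_8_2, finv_8_3, finv_8_4, finv_8_5, finv_8_6, finv_8_7, finv_9_2, finv_9_3, finv_9_4, finv_9_5, finv_9_6, finv_9_7, finv_9_8, finv_10_2, finv_10_3, finv_10_4, finv_10_5, finv_10_6, finv_10_7, finv_10_8, finv_10_9, finv_11_2, finv_11_3, finv_11_4, finv_11_5, finv_11_6, finv_11_7, finv_11_8, finv_11_9, finv_11_10,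 finv_12_2, finv_12_3, finv_12_4, finv_12_5, finv_12_6, finv_12_7, finv_12_8, finv_12_9, finv_12_10, finv_12_11,
    mul_one, mul_zero, zero_sub, sub_zero, Complex.ofReal_zero, neg_zero,
    implies_true, and_true, and_self, true_and, eq_self_iff_true]

lemma detkey (Lam d dT dH dHT k1 k2 r r1 r2 r3 p1 p2 e1 e2 g al be ls Nv : ℝ) (μ : ℂ) :
    (μ • (1 : Matrix (Fin 12) (Fin 12) ℂ) -
        (fullJacDFE Lam d dT dH dHT k1 k2 r r1 r2 r3 p1 p2 e1 e2 g al be ls Nv).map Complex.ofReal).det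
    = (μ - ((-d : ℝ) : ℂ)) * (μ - ((-(r1 + d + dT) : ℝ) : ℂ)) * (μ - ((-(d + dH) : ℝ) : ℂ)) * (μ - ((-(d + dH + al * dHT) : ℝ) : ℂ)) * (μ - ((-(p1 + d + dH + g * dHT) : ℝ) : ℂ)) * (μ - ((ls * Lam / (Nv * d) - (r2 + d + dH) : ℝ) : ℂ)) * (μ - ((-(p2 + d + dH + e2) : ℝ) : ℂ)) * (μ - ((-(p1 + d + dH + e1) : ℝ) : ℂ)) * (μ - ((-(k2 + d + dH) : ℝ) : ℂ)) * (μ - ((-(d + dT + dH + r3) : ℝ) : ℂ)) *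
      ((μ - ((-(d + k1) : ℝ) : ℂ)) * (μ - ((-(d + dT + r) : ℝ) : ℂ)) - (-((be * Lam / (Nv * d) : ℝ) : ℂ)) * (-((k1 : ℝ) : ℂ))) := by
  rw [← Matrix.det_submatrix_equiv_self wperm, perm_eq, det12]

open Polynomial in
lemma charpoly_eval {n : ℕ} (M : Matrix (Fin n) (Fin n) ℂ) (μ : ℂ) :
    M.charpoly.eval μ = (μ • (1 : Matrix (Fin n) (Fin n) ℂ) - M).det := by
  rw [Matrix.charpoly, ← Polynomial.coe_evalRingHom, RingHom.map_det]
  congr 1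
  ext i j
  by_cases h : i = j <;>
    simp [Matrix.charmatrix_apply, h, Matrix.one_apply, Matrix.sub_apply, Matrix.smul_apply,
      Matrix.diagonal_apply]

lemma lin_neg (μ : ℂ) (c : ℝ) (hc : c < 0) (h : μ - (c : ℂ) = 0) : μ.re < 0 := by
  have hm : μ = (c : ℂ) := by linear_combination h
  rw [hm, Complex.ofReal_re]; exact hc

lemma quad_re_neg (μ : ℂ) (p q : ℝ) (hp : 0 < p) (hq : 0 < q)
    (h : μ ^ 2 + (p : ℂ) * μ + (q : ℂ) = 0) : μ.re < 0 := by
  have hre := congrArg Complex.re h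
  have him := congrArg Complex.im h
  simp only [Complex.add_re, Complex.add_im, Complex.mul_re, Complex.mul_im, pow_two,
    Complex.ofReal_re, Complex.ofReal_im, Complex.zero_re, Complex.zero_im, zero_mul, mul_zero,
    sub_zero, add_zero, zero_add, zero_sub, neg_zero] at hre him
  rcases eq_or_ne μ.im 0 with h0 | h0
  · rw [h0] at hre
    nlinarith [hre, sq_nonneg μ.re]
  · have h2 : μ.im * (2 * μ.re + p) = 0 := by linarith [him]
    have h3 := (mul_eq_zero.mp h2).resolve_left h0
    linarith

example (μ : ℂ) (p q : ℝ) (h : μ ^ 2 + (p : ℂ) * μ + (q : ℂ) = 0) : True := trivial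

/-- Local stability of the disease-free equilibrium of the full model (Theorem 5.1):
if `max{R0T, R0H} < 1` every eigenvalue of the Jacobian at the DFE has negative real part;
if `max{R0T, R0H} > 1` there is an eigenvalue with positive real part. -/
theorem full_DFE_local_stability
    (Lam d dT dH dHT k1 k2 r r1 r2 r3 p1 p2 e1 e2 g be ls Nv : ℝ)
    (hLam : 0 < Lam) (hd : 0 < d) (hdT : 0 < dT) (hdH : 0 < dH) (hdHT : 0 < dHT)
    (hk1 : 0 < k1) (hk2 : 0 < k2) (hr : 0 < r) (hr1 : 0 < r1) (hr2 : 0 < r2)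
    (hr3 : 0 < r3) (hp1 : 0 < p1) (hp2 : 0 < p2) (he1 : 0 < e1) (he2 : 0 < e2)
    (hg : 0 < g) (hbe : 0 < be) (hls : 0 < ls) (hNv : 0 < Nv)
    (al : ℝ) (hal : al = g * p1 / (p1 + p2)) :
    (max (be * Lam * k1 / (Nv * d * (d + r + dT) * (d + k1)))
         (Lam * ls / (Nv * d * (r2 + d + dH))) < 1 →
      ∀ μ : ℂ, (Matrix.charpoly
          ((fullJacDFE Lam d dT dH dHT k1 k2 r r1 r2 r3 p1 p2 e1 e2 g al be ls Nv).map
            Complex.ofReal)).IsRoot μ → μ.re < 0) ∧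
    (1 < max (be * Lam * k1 / (Nv * d * (d + r + dT) * (d + k1)))
         (Lam * ls / (Nv * d * (r2 + d + dH))) →
      ∃ μ : ℂ, (Matrix.charpoly
          ((fullJacDFE Lam d dT dH dHT k1 k2 r r1 r2 r3 p1 p2 e1 e2 g al be ls Nv).map
            Complex.ofReal)).IsRoot μ ∧ 0 < μ.re) := by
  have hal' : 0 < al := by rw [hal]; positivity
  constructor
  · intro hmax μ hroot
    have hT := (max_lt_iff.mp hmax).1
    have hH := (max_lt_iff.mp hmax).2
    rw [Polynomial.IsRoot.def, charpoly_eval, detkey] at hroot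
    have hHlt : ls * Lam / (Nv * d) - (r2 + d + dH) < 0 := by
      have hden : (0:ℝ) < Nv * d * (r2 + d + dH) := by positivity
      have h1 := (div_lt_one hden).mp hH
      have h2 : ls * Lam / (Nv * d) < r2 + d + dH := by
        rw [div_lt_iff₀ (by positivity : (0:ℝ) < Nv * d)]
        nlinarith
      linarith
    have hTq : 0 < (d + k1) * (d + dT + r) - be * Lam / (Nv * d) * k1 := by
      have hden : (0:ℝ) < Nv * d * (d + r + dT) * (d + k1) := by positivity
      have h1 := (div_lt_one hden).mp hT
      have h2 : be * Lam / (Nv * d) * k1 < (d + k1) * (d + dT + r) := by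
        rw [div_mul_eq_mul_div, div_lt_iff₀ (by positivity : (0:ℝ) < Nv * d)]
        nlinarith
      linarith
    rcases mul_eq_zero.mp hroot with h | hq
    · rcases mul_eq_zero.mp h with h | h10
      · rcases mul_eq_zero.mp h with h | h9
        · rcases mul_eq_zero.mp h with h | h8
          · rcases mul_eq_zero.mp h with h | h7
            · rcases mul_eq_zero.mp h with h | h6
              · rcases mul_eq_zero.mp h with h | h5
                · rcases mul_eq_zero.mp h with h | h4
                  · rcases mul_eq_zero.mp h with h | h3
                    · rcases mul_eq_zero.mp h with h1 | h2
                      · exact lin_neg μ _ (by linarith) h1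
                      · exact lin_neg μ _ (by linarith) h2
                    · exact lin_neg μ _ (by linarith) h3
                  · exact lin_neg μ _ (by nlinarith) h4
                · exact lin_neg μ _ (by nlinarith) h5
              · exact lin_neg μ _ hHlt h6
            · exact lin_neg μ _ (by linarith) h7
          · exact lin_neg μ _ (by linarith) h8
        · exact lin_neg μ _ (by linarith) h9
      · exact lin_neg μ _ (by linarith) h10
    · have h2 : μ ^ 2 + (((d + k1) + (d + dT + r) : ℝ) : ℂ) * μ +
          (((d + k1) * (d + dT + r) - be * Lam / (Nv * d) * k1 : ℝ) : ℂ) = 0 := by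
        push_cast at hq ⊢
        linear_combination hq
      exact quad_re_neg μ _ _ (by linarith) hTq h2
  · intro hmax
    rcases lt_max_iff.mp hmax with hT | hH
    · -- R0T > 1 : positive root of the quadratic factor
      set p : ℝ := (d + k1) + (d + dT + r) with hp_def
      set q : ℝ := (d + k1) * (d + dT + r) - be * Lam / (Nv * d) * k1 with hq_def
      have hp : 0 < p := by rw [hp_def]; linarith
      have hqneg : q < 0 := by
        have hden : (0:ℝ) < Nv * d * (d + r + dT) * (d + k1) := by positivity
        have h1 := (one_lt_div hden).mp hT
        have h2 : (d + k1) * (d + dT + r) < be * Lam / (Nv * d) * k1 := by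
          rw [div_mul_eq_mul_div, lt_div_iff₀ (by positivity : (0:ℝ) < Nv * d)]
          nlinarith
        rw [hq_def]; linarith
      have hdisc : (0:ℝ) ≤ p ^ 2 - 4 * q := by nlinarith [sq_nonneg p]
      have hs := Real.sq_sqrt hdisc
      set s : ℝ := Real.sqrt (p ^ 2 - 4 * q) with hs_def
      have hps : p < s := by
        rw [hs_def]
        exact (Real.lt_sqrt hp.le).mpr (by nlinarith)
      set x : ℝ := (-p + s) / 2 with hx_def
      have hxpos : 0 < x := by rw [hx_def]; linarith
      have hxeq : x ^ 2 + p * x + q = 0 := by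
        rw [hx_def]; linear_combination hs / 4
      refine ⟨(x : ℂ), ?_, by simpa using hxpos⟩
      rw [Polynomial.IsRoot.def, charpoly_eval, detkey]
      apply mul_eq_zero_of_right
      have hfac : ((x:ℂ) - ((-(d + k1) : ℝ) : ℂ)) * ((x:ℂ) - ((-(d + dT + r) : ℝ) : ℂ)) -
          (-((be * Lam / (Nv * d) : ℝ) : ℂ)) * (-((k1 : ℝ) : ℂ))
          = ((x ^ 2 + p * x + q : ℝ) : ℂ) := by
        rw [hp_def, hq_def]; push_cast; ring
      rw [hfac, hxeq, Complex.ofReal_zero]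
    · -- R0H > 1
      set c : ℝ := ls * Lam / (Nv * d) - (r2 + d + dH) with hc_def
      have hcpos : 0 < c := by
        have hden : (0:ℝ) < Nv * d * (r2 + d + dH) := by positivity
        have h1 := (one_lt_div hden).mp hH
        have h2 : r2 + d + dH < ls * Lam / (Nv * d) := by
          rw [lt_div_iff₀ (by positivity : (0:ℝ) < Nv * d)]
          nlinarith
        rw [hc_def]; linarith
      refine ⟨(c : ℂ), ?_, by simpa using hcpos⟩
      rw [Polynomial.IsRoot.def, charpoly_eval, detkey]
      apply mul_eq_zero_of_left
      apply mul_eq_zero_of_left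
      apply mul_eq_zero_of_left
      apply mul_eq_zero_of_left
      apply mul_eq_zero_of_left
      exact mul_eq_zero_of_right _ (sub_self _)
end

section
/- Existence of the TB-only endemic equilibrium of the full model (part of Theorem 5.2): suppose R0T = βe·Λ·k1/(N·d·(d+r+dT)·(d+k1)) > 1. Let λT* = (βe·Λ·k1·(d+dT+r1)/N − d·(d+r+dT)·(d+k1)·(d+dT+r1)) / ((d+dT+r)·(d+k1)·(d+dT+r1) − r·k1·r1), A = (d+r+dT)·(d+λT*)·(d+k1)·(d+dT+r1) − r·λT*·k1·r1, Ŝ = Λ·(d+r+dT)·(d+k1)·(d+dT+r1)/A, T̂_L = Λ·λT*·(d+r+dT)·(d+dT+r1)/A, T̂_I = Λ·λT*·k1·(d+dT+r1)/A, T̂_T = r·Λ·λT*·k1/A. Then the twelve-dimensional point E_T = (Ŝ, T̂_L, T̂_I, 0, 0, 0, 0, 0, 0, 0, 0, T̂_T) makes all twelve right-hand sides of the full HIV–TB model (with N held as the fixed positive constant) vanish, and Ŝ, T̂_L, T̂_I, T̂_T are all strictly positive. -/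
/-!
On the HIV-free face every HIV compartment vanishes, so only the TB sub-model in `S, T_L, T_I, T_T`
survives. Freezing the force of infection `βe·T_I/N` at a value `λ` makes that sub-model linear,
and its equilibrium is the stated point with `λ` in place of `λT*`, with denominator
`A(λ) = d·P + λ·D`, `P = (d+r+dT)(d+k1)(d+dT+r1)`, `D = P − r·k1·r1 > 0`. Consistency,
`βe·T̂_I/N = λ`, amounts to `N·A(λ) = βe·Λ·k1·(d+dT+r1)`, which is linear in `λ` with root `λT*`;
`R0T > 1` is exactly `λT* > 0`.
-/

section TBOnly

variable {Lam d dT k1 r r1 lam A : ℝ}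

theorem tbOnly_denom_pos (hd : 0 < d) (hdT : 0 ≤ dT) (hk1 : 0 ≤ k1) (hr : 0 ≤ r)
    (hr1 : 0 ≤ r1) : 0 < (d + dT + r) * (d + k1) * (d + dT + r1) - r * k1 * r1 :=
  sub_pos.mpr <| mul_lt_mul'' (mul_lt_mul'' (by linarith) (by linarith) hr hk1) (by linarith)
    (by positivity) hr1

theorem tbOnly_A_decomp (hA : A = (d + r + dT) * (d + lam) * (d + k1) * (d + dT + r1)
      - r * lam * k1 * r1) :
    A = d * ((d + r + dT) * (d + k1) * (d + dT + r1))
      + lam * ((d + dT + r) * (d + k1) * (d + dT + r1) - r * k1 * r1) := by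
  rw [hA]; ring

theorem tbOnly_equilibrium {S TL TI TT : ℝ} (hA0 : A ≠ 0)
    (hS : S = Lam * (d + r + dT) * (d + k1) * (d + dT + r1) / A)
    (hTL : TL = Lam * lam * (d + r + dT) * (d + dT + r1) / A)
    (hTI : TI = Lam * lam * k1 * (d + dT + r1) / A)
    (hTT : TT = r * Lam * lam * k1 / A)
    (hA : A = (d + r + dT) * (d + lam) * (d + k1) * (d + dT + r1) - r * lam * k1 * r1) :
    Lam - lam * S - d * S + r1 * TT = 0 ∧ lam * S - (d + k1) * TL = 0 ∧
      k1 * TL - (d + dT + r) * TI = 0 ∧ r * TI - (r1 + d + dT) * TT = 0 := by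
  subst hS hTL hTI hTT
  refine ⟨?_, ?_, ?_, ?_⟩ <;> field_simp
  · linear_combination Lam * hA
  all_goals ring

theorem tbOnly_force_consistent {be Nv TI : ℝ} (hNv : Nv ≠ 0) (hA0 : A ≠ 0)
    (hD : (d + dT + r) * (d + k1) * (d + dT + r1) - r * k1 * r1 ≠ 0)
    (hlam : lam = (be * Lam * k1 * (d + dT + r1) / Nv
        - d * (d + r + dT) * (d + k1) * (d + dT + r1)) /
        ((d + dT + r) * (d + k1) * (d + dT + r1) - r * k1 * r1))
    (hA : A = (d + r + dT) * (d + lam) * (d + k1) * (d + dT + r1) - r * lam * k1 * r1)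
    (hTI : TI = Lam * lam * k1 * (d + dT + r1) / A) :
    be * TI / Nv = lam := by
  have hNA : Nv * A = be * Lam * k1 * (d + dT + r1) := by
    rw [tbOnly_A_decomp hA, hlam, div_mul_cancel₀ _ hD]
    field_simp
    ring
  calc be * TI / Nv = lam * (be * Lam * k1 * (d + dT + r1)) / (Nv * A) := by rw [hTI]; ring
    _ = lam := by rw [← hNA, mul_div_assoc, div_self (mul_ne_zero hNv hA0), mul_one]

theorem tbOnly_lam_pos_of_one_lt_R0 {be Nv : ℝ} (hd : 0 < d) (hdT : 0 ≤ dT) (hk1 : 0 ≤ k1)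
    (hr : 0 ≤ r) (hr1 : 0 ≤ r1) (hNv : 0 < Nv)
    (hR : 1 < be * Lam * k1 / (Nv * d * (d + r + dT) * (d + k1)))
    (hlam : lam = (be * Lam * k1 * (d + dT + r1) / Nv
        - d * (d + r + dT) * (d + k1) * (d + dT + r1)) /
        ((d + dT + r) * (d + k1) * (d + dT + r1) - r * k1 * r1)) :
    0 < lam := by
  have hRR : Nv * d * (d + r + dT) * (d + k1) < be * Lam * k1 :=
    (one_lt_div (by positivity)).mp hR
  rw [hlam]
  refine div_pos (sub_pos.mpr ((lt_div_iff₀ hNv).mpr ?_)) (tbOnly_denom_pos hd hdT hk1 hr hr1)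
  calc d * (d + r + dT) * (d + k1) * (d + dT + r1) * Nv
      = Nv * d * (d + r + dT) * (d + k1) * (d + dT + r1) := by ring
    _ < be * Lam * k1 * (d + dT + r1) := by gcongr

end TBOnly

theorem full_TB_endemic_equilibrium_general
    (Lam d dT dH dHT k1 k2 r r1 r2 r3 p1 p2 e1 e2 g be ls Nv : ℝ)
    (hLam : 0 < Lam) (hd : 0 < d) (hdT : 0 < dT)
    (hk1 : 0 < k1) (hr : 0 < r) (hr1 : 0 < r1)
    (hNv : 0 < Nv)
    (al : ℝ)
    (hR : 1 < be * Lam * k1 / (Nv * d * (d + r + dT) * (d + k1)))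
    (lamT A Sh TLh TIh TTh : ℝ)
    (hlamT : lamT = (be * Lam * k1 * (d + dT + r1) / Nv
        - d * (d + r + dT) * (d + k1) * (d + dT + r1)) /
        ((d + dT + r) * (d + k1) * (d + dT + r1) - r * k1 * r1))
    (hA : A = (d + r + dT) * (d + lamT) * (d + k1) * (d + dT + r1) - r * lamT * k1 * r1)
    (hSh : Sh = Lam * (d + r + dT) * (d + k1) * (d + dT + r1) / A)
    (hTLh : TLh = Lam * lamT * (d + r + dT) * (d + dT + r1) / A)
    (hTIh : TIh = Lam * lamT * k1 * (d + dT + r1) / A)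
    (hTTh : TTh = r * Lam * lamT * k1 / A) :
    (0 < Sh ∧ 0 < TLh ∧ 0 < TIh ∧ 0 < TTh) ∧
    -- the twelve right-hand sides of the full model, evaluated at
    -- (Sh, TLh, TIh, 0, 0, 0, 0, 0, 0, 0, 0, TTh), all vanish:
    (Lam - be * Sh * (TIh + 0) / Nv - d * Sh
        - ls * Sh * (0 + 0 + 0 + 0 + 0) / Nv + r1 * TTh = 0) ∧
    (be * Sh * (TIh + 0) / Nv - (d + k1) * TLh
        - ls * TLh * (0 + 0 + 0 + 0 + 0) / Nv = 0) ∧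
    (k1 * TLh - (d + dT + r) * TIh - ls * TIh * (0 + 0 + 0 + 0 + 0) / Nv = 0) ∧
    (ls * Sh * (0 + 0 + 0 + 0 + 0) / Nv - (r2 + d + dH) * 0
        - be * 0 * (TIh + 0) / Nv + p2 * 0 = 0) ∧
    (ls * TLh * (0 + 0 + 0 + 0 + 0) / Nv + be * 0 * (TIh + 0) / Nv
        - (k2 + d + dH) * 0 = 0) ∧
    (k2 * 0 + ls * TIh * (0 + 0 + 0 + 0 + 0) / Nv - (d + dT + dH + r3) * 0 = 0) ∧
    (r3 * 0 - (p1 + d + dH + e1) * 0 = 0) ∧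
    (p1 * 0 - (p2 + d + dH + e2) * 0 = 0) ∧
    (e1 * 0 - (p1 + d + dH + g * dHT) * 0 = 0) ∧
    (e2 * 0 + p1 * 0 - (d + dH + al * dHT) * 0 = 0) ∧
    (p2 * 0 + r2 * 0 - (d + dH) * 0 = 0) ∧
    (r * TIh - (r1 + d + dT) * TTh = 0) := by
  have hD := tbOnly_denom_pos hd hdT.le hk1.le hr.le hr1.le
  have hlam := tbOnly_lam_pos_of_one_lt_R0 hd hdT.le hk1.le hr.le hr1.le hNv hR hlamT
  have hApos : 0 < A := by
    rw [tbOnly_A_decomp hA]; positivity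
  have hforce : be * Sh * TIh / Nv = lamT * Sh := by
    rw [mul_right_comm, mul_div_right_comm,
      tbOnly_force_consistent hNv.ne' hApos.ne' hD.ne' hlamT hA hTIh]
  obtain ⟨hSbal, hTLbal, hTIbal, hTTbal⟩ :=
    tbOnly_equilibrium hApos.ne' hSh hTLh hTIh hTTh hA
  refine ⟨⟨?_, ?_, ?_, ?_⟩, ?_⟩
  · rw [hSh]; positivity
  · rw [hTLh]; positivity
  · rw [hTIh]; positivity
  · rw [hTTh]; positivity
  simp only [add_zero, mul_zero, zero_mul, zero_div, sub_zero, sub_self, hforce, true_and]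
  exact ⟨hSbal, hTLbal, hTIbal, hTTbal⟩

/-- Existence of the TB-only endemic equilibrium of the full model (part of Theorem 5.2):
if `R0T > 1`, the point `E_T = (Ŝ, T̂_L, T̂_I, 0, 0, 0, 0, 0, 0, 0, 0, T̂_T)` makes all
twelve right-hand sides of the full HIV–TB model vanish, and `Ŝ, T̂_L, T̂_I, T̂_T > 0`. -/
theorem full_TB_endemic_equilibrium
    (Lam d dT dH dHT k1 k2 r r1 r2 r3 p1 p2 e1 e2 g be ls Nv : ℝ)
    (hLam : 0 < Lam) (hd : 0 < d) (hdT : 0 < dT) (hdH : 0 < dH) (hdHT : 0 < dHT)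
    (hk1 : 0 < k1) (hk2 : 0 < k2) (hr : 0 < r) (hr1 : 0 < r1) (hr2 : 0 < r2)
    (hr3 : 0 < r3) (hp1 : 0 < p1) (hp2 : 0 < p2) (he1 : 0 < e1) (he2 : 0 < e2)
    (hg : 0 < g) (hbe : 0 < be) (hls : 0 < ls) (hNv : 0 < Nv)
    (al : ℝ) (hal : al = g * p1 / (p1 + p2))
    (hR : 1 < be * Lam * k1 / (Nv * d * (d + r + dT) * (d + k1)))
    (lamT A Sh TLh TIh TTh : ℝ)
    (hlamT : lamT = (be * Lam * k1 * (d + dT + r1) / Nv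
        - d * (d + r + dT) * (d + k1) * (d + dT + r1)) /
        ((d + dT + r) * (d + k1) * (d + dT + r1) - r * k1 * r1))
    (hA : A = (d + r + dT) * (d + lamT) * (d + k1) * (d + dT + r1) - r * lamT * k1 * r1)
    (hSh : Sh = Lam * (d + r + dT) * (d + k1) * (d + dT + r1) / A)
    (hTLh : TLh = Lam * lamT * (d + r + dT) * (d + dT + r1) / A)
    (hTIh : TIh = Lam * lamT * k1 * (d + dT + r1) / A)
    (hTTh : TTh = r * Lam * lamT * k1 / A) :
    (0 < Sh ∧ 0 < TLh ∧ 0 < TIh ∧ 0 < TTh) ∧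
    -- the twelve right-hand sides of the full model, evaluated at
    -- (Sh, TLh, TIh, 0, 0, 0, 0, 0, 0, 0, 0, TTh), all vanish:
    (Lam - be * Sh * (TIh + 0) / Nv - d * Sh
        - ls * Sh * (0 + 0 + 0 + 0 + 0) / Nv + r1 * TTh = 0) ∧
    (be * Sh * (TIh + 0) / Nv - (d + k1) * TLh
        - ls * TLh * (0 + 0 + 0 + 0 + 0) / Nv = 0) ∧
    (k1 * TLh - (d + dT + r) * TIh - ls * TIh * (0 + 0 + 0 + 0 + 0) / Nv = 0) ∧
    (ls * Sh * (0 + 0 + 0 + 0 + 0) / Nv - (r2 + d + dH) * 0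
        - be * 0 * (TIh + 0) / Nv + p2 * 0 = 0) ∧
    (ls * TLh * (0 + 0 + 0 + 0 + 0) / Nv + be * 0 * (TIh + 0) / Nv
        - (k2 + d + dH) * 0 = 0) ∧
    (k2 * 0 + ls * TIh * (0 + 0 + 0 + 0 + 0) / Nv - (d + dT + dH + r3) * 0 = 0) ∧
    (r3 * 0 - (p1 + d + dH + e1) * 0 = 0) ∧
    (p1 * 0 - (p2 + d + dH + e2) * 0 = 0) ∧
    (e1 * 0 - (p1 + d + dH + g * dHT) * 0 = 0) ∧
    (e2 * 0 + p1 * 0 - (d + dH + al * dHT) * 0 = 0) ∧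
    (p2 * 0 + r2 * 0 - (d + dH) * 0 = 0) ∧
    (r * TIh - (r1 + d + dT) * TTh = 0) :=
  full_TB_endemic_equilibrium_general Lam d dT dH dHT k1 k2 r r1 r2 r3 p1 p2 e1 e2 g be ls Nv hLam
    hd hdT hk1 hr hr1 hNv al hR lamT A Sh TLh TIh TTh hlamT hA hSh hTLh hTIh hTTh
end

section
/- Existence of the HIV-only endemic equilibrium of the full model (part of Theorem 5.3): suppose R0H = Λ·λσ/(N·d·(r2+d+dH)) > 1. Let S̃ = N·(r2+d+dH)/(λσ), H̃ = Λ/(r2+d+dH) − d·N/(λσ), and H̃T = r2·H̃/(d+dH). Then the twelve-dimensional point E_H = (S̃, 0, 0, H̃, 0, 0, 0, 0, 0, 0, H̃T, 0) makes all twelve right-hand sides of the full HIV–TB model (with N held as the fixed positive constant) vanish, and S̃, H̃, H̃T are all strictly positive. -/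
/-! On the face `T_L = T_I = H_L = C = C₁ = C₂ = C₁T = C₂T = T_T = 0` the full model reduces to the
susceptible–infected system `S' = Λ - d S - λσ S H / N`, `H' = λσ S H / N - (r₂ + d + d_H) H`, `HT' = r₂ H - (d + d_H) HT`.
Its nontrivial equilibrium has the force of infection `λσ S / N` equal to the exit rate
`r₂ + d + d_H`, which fixes `S̃`; the `S`-balance then fixes `H̃`, which is positive exactly when
`R0H > 1`, and `H̃T` is read off from the last equation. -/

section HIVOnlyEquilibrium

variable {Lam d ls Nv m : ℝ}

lemma infection_balance_at_threshold (hls : ls ≠ 0) (hNv : Nv ≠ 0) (H : ℝ) :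
    ls * (Nv * m / ls) * H / Nv - m * H = 0 := by
  field_simp
  ring

lemma susceptible_balance_at_equilibrium (hls : ls ≠ 0) (hNv : Nv ≠ 0) (hm : m ≠ 0) :
    Lam - d * (Nv * m / ls) - ls * (Nv * m / ls) * (Lam / m - d * Nv / ls) / Nv = 0 := by
  field_simp
  ring

lemma infected_equilibrium_pos (hd : 0 < d) (hls : 0 < ls) (hNv : 0 < Nv) (hm : 0 < m)
    (hR : 1 < Lam * ls / (Nv * d * m)) :
    0 < Lam / m - d * Nv / ls := by
  rw [one_lt_div (by positivity)] at hR
  rw [sub_pos, div_lt_div_iff₀ hls hm]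
  linarith

end HIVOnlyEquilibrium

theorem full_HIV_endemic_equilibrium_general
    (Lam d dT dH dHT k1 k2 r r1 r2 r3 p1 p2 e1 e2 g be ls Nv : ℝ)
    (hd : 0 < d) (hdH : 0 < dH) (hr2 : 0 < r2)
    (hls : 0 < ls) (hNv : 0 < Nv)
    (al : ℝ)
    (hR : 1 < Lam * ls / (Nv * d * (r2 + d + dH)))
    (St Ht HtT : ℝ)
    (hSt : St = Nv * (r2 + d + dH) / ls)
    (hHt : Ht = Lam / (r2 + d + dH) - d * Nv / ls)
    (hHtT : HtT = r2 * Ht / (d + dH)) :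
    (0 < St ∧ 0 < Ht ∧ 0 < HtT) ∧
    -- the twelve right-hand sides of the full model, evaluated at
    -- (St, 0, 0, Ht, 0, 0, 0, 0, 0, 0, HtT, 0), all vanish:
    (Lam - be * St * (0 + 0) / Nv - d * St
        - ls * St * (Ht + 0 + 0 + 0 + 0) / Nv + r1 * 0 = 0) ∧
    (be * St * (0 + 0) / Nv - (d + k1) * 0
        - ls * 0 * (Ht + 0 + 0 + 0 + 0) / Nv = 0) ∧
    (k1 * 0 - (d + dT + r) * 0 - ls * 0 * (Ht + 0 + 0 + 0 + 0) / Nv = 0) ∧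
    (ls * St * (Ht + 0 + 0 + 0 + 0) / Nv - (r2 + d + dH) * Ht
        - be * Ht * (0 + 0) / Nv + p2 * 0 = 0) ∧
    (ls * 0 * (Ht + 0 + 0 + 0 + 0) / Nv + be * Ht * (0 + 0) / Nv
        - (k2 + d + dH) * 0 = 0) ∧
    (k2 * 0 + ls * 0 * (Ht + 0 + 0 + 0 + 0) / Nv - (d + dT + dH + r3) * 0 = 0) ∧
    (r3 * 0 - (p1 + d + dH + e1) * 0 = 0) ∧
    (p1 * 0 - (p2 + d + dH + e2) * 0 = 0) ∧
    (e1 * 0 - (p1 + d + dH + g * dHT) * 0 = 0) ∧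
    (e2 * 0 + p1 * 0 - (d + dH + al * dHT) * 0 = 0) ∧
    (p2 * 0 + r2 * Ht - (d + dH) * HtT = 0) ∧
    (r * 0 - (r1 + d + dT) * 0 = 0) := by
  have hm : 0 < r2 + d + dH := by positivity
  have hdd : 0 < d + dH := by positivity
  have hHt_pos : 0 < Ht := hHt ▸ infected_equilibrium_pos hd hls hNv hm hR
  subst hSt hHtT
  refine ⟨⟨by positivity, hHt_pos, by positivity⟩, ?susceptible, by simp, by simp, ?infected,
    by simp, by simp, by simp, by simp, by simp, by simp, ?treated, by simp⟩
  case susceptible =>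
    simpa [hHt] using susceptible_balance_at_equilibrium (Lam := Lam) (d := d) hls.ne' hNv.ne' hm.ne'
  case infected => simpa using infection_balance_at_threshold hls.ne' hNv.ne' Ht
  case treated => simpa using sub_eq_zero.mpr (mul_div_cancel₀ (r2 * Ht) hdd.ne').symm

/-- Existence of the HIV-only endemic equilibrium of the full model (part of Theorem 5.3):
if `R0H > 1`, the point `E_H = (S̃, 0, 0, H̃, 0, 0, 0, 0, 0, 0, H̃T, 0)` makes all twelve
right-hand sides of the full HIV–TB model vanish, and `S̃, H̃, H̃T > 0`. -/
theorem full_HIV_endemic_equilibrium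
    (Lam d dT dH dHT k1 k2 r r1 r2 r3 p1 p2 e1 e2 g be ls Nv : ℝ)
    (hLam : 0 < Lam) (hd : 0 < d) (hdT : 0 < dT) (hdH : 0 < dH) (hdHT : 0 < dHT)
    (hk1 : 0 < k1) (hk2 : 0 < k2) (hr : 0 < r) (hr1 : 0 < r1) (hr2 : 0 < r2)
    (hr3 : 0 < r3) (hp1 : 0 < p1) (hp2 : 0 < p2) (he1 : 0 < e1) (he2 : 0 < e2)
    (hg : 0 < g) (hbe : 0 < be) (hls : 0 < ls) (hNv : 0 < Nv)
    (al : ℝ) (hal : al = g * p1 / (p1 + p2))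
    (hR : 1 < Lam * ls / (Nv * d * (r2 + d + dH)))
    (St Ht HtT : ℝ)
    (hSt : St = Nv * (r2 + d + dH) / ls)
    (hHt : Ht = Lam / (r2 + d + dH) - d * Nv / ls)
    (hHtT : HtT = r2 * Ht / (d + dH)) :
    (0 < St ∧ 0 < Ht ∧ 0 < HtT) ∧
    -- the twelve right-hand sides of the full model, evaluated at
    -- (St, 0, 0, Ht, 0, 0, 0, 0, 0, 0, HtT, 0), all vanish:
    (Lam - be * St * (0 + 0) / Nv - d * St
        - ls * St * (Ht + 0 + 0 + 0 + 0) / Nv + r1 * 0 = 0) ∧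
    (be * St * (0 + 0) / Nv - (d + k1) * 0
        - ls * 0 * (Ht + 0 + 0 + 0 + 0) / Nv = 0) ∧
    (k1 * 0 - (d + dT + r) * 0 - ls * 0 * (Ht + 0 + 0 + 0 + 0) / Nv = 0) ∧
    (ls * St * (Ht + 0 + 0 + 0 + 0) / Nv - (r2 + d + dH) * Ht
        - be * Ht * (0 + 0) / Nv + p2 * 0 = 0) ∧
    (ls * 0 * (Ht + 0 + 0 + 0 + 0) / Nv + be * Ht * (0 + 0) / Nv
        - (k2 + d + dH) * 0 = 0) ∧
    (k2 * 0 + ls * 0 * (Ht + 0 + 0 + 0 + 0) / Nv - (d + dT + dH + r3) * 0 = 0) ∧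
    (r3 * 0 - (p1 + d + dH + e1) * 0 = 0) ∧
    (p1 * 0 - (p2 + d + dH + e2) * 0 = 0) ∧
    (e1 * 0 - (p1 + d + dH + g * dHT) * 0 = 0) ∧
    (e2 * 0 + p1 * 0 - (d + dH + al * dHT) * 0 = 0) ∧
    (p2 * 0 + r2 * Ht - (d + dH) * HtT = 0) ∧
    (r * 0 - (r1 + d + dT) * 0 = 0) :=
  full_HIV_endemic_equilibrium_general Lam d dT dH dHT k1 k2 r r1 r2 r3 p1 p2 e1 e2 g be ls Nv hd
    hdH hr2 hls hNv al hR St Ht HtT hSt hHt hHtT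
end

section
/- Next-generation computation of the TB reproduction number: for the TB submodel, let F = [[0, βe·Λ/(N·d), 0], [0, 0, 0], [0, 0, 0]] be the new-infections matrix and V = [[d+k1, 0, 0], [−k1, d+dT+r, 0], [0, −r, r1+d+dT]] the transition matrix for the infected compartments (T_L, T_I, T_T) at the disease-free equilibrium. Then V is invertible and the spectral radius of F·V⁻¹ (the largest modulus of its complex eigenvalues) equals R0T = βe·Λ·k1/(N·d·(d+r+dT)·(d+k1)). -/
/-!
`V` is lower bidiagonal, so its inverse is explicit and `F * V⁻¹` is supported on its first
row, like `F`. Such a matrix is upper triangular, so its eigenvalues are its diagonal entries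
`0, 0` and `(F * V⁻¹) 0 0 = βe Λ k1 / (N d (d + r + dT) (d + k1))`.
-/

open Polynomial

namespace Matrix

theorem IsUpperTriangular.isRoot_charpoly_iff {n R : Type*} [Fintype n] [DecidableEq n]
    [LinearOrder n] [CommRing R] [IsDomain R] {M : Matrix n n R} (hM : M.IsUpperTriangular)
    {μ : R} : M.charpoly.IsRoot μ ↔ ∃ i, μ = M i i := by
  rw [charpoly_of_isUpperTriangular M hM, isRoot_prod]
  simp [sub_eq_zero]

theorem isUpperTriangular_of_apply_eq_zero_of_ne_zero {n : ℕ} {R : Type*} [Zero R]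
    {M : Matrix (Fin (n + 1)) (Fin (n + 1)) R} (hM : ∀ i j, i ≠ 0 → M i j = 0) :
    M.IsUpperTriangular :=
  fun i j hji => hM i j ((Fin.zero_le j).trans_lt hji).ne'

theorem mul_lowerBidiagonal_inv_fin_three {K : Type*} [Field K] {a b c : K}
    (ha : a ≠ 0) (hb : b ≠ 0) (hc : c ≠ 0) (p q : K) :
    !![a, 0, 0; p, b, 0; 0, q, c] *
      !![a⁻¹, 0, 0; -p / (a * b), b⁻¹, 0; p * q / (a * b * c), -q / (b * c), c⁻¹] = 1 := by
  ext i j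
  fin_cases i <;> fin_cases j <;> simp [mul_apply, Fin.sum_univ_three] <;>
    field_simp <;> ring

end Matrix

open Matrix

/-- Next-generation computation of the TB reproduction number: with new-infections matrix
`F` and transition matrix `V` for the infected compartments `(T_L, T_I, T_T)` at the
disease-free equilibrium, `V` is invertible and the spectral radius of `F·V⁻¹` equals
`R0T = βe·Λ·k1/(N·d·(d+r+dT)·(d+k1))`. -/
theorem TB_next_generation (Lam d dT k1 r r1 be Nv : ℝ)
    (hLam : 0 < Lam) (hd : 0 < d) (hdT : 0 < dT) (hk1 : 0 < k1)
    (hr : 0 < r) (hr1 : 0 < r1) (hbe : 0 < be) (hNv : 0 < Nv)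
    (F V : Matrix (Fin 3) (Fin 3) ℝ)
    (hF : F = !![0, be * Lam / (Nv * d), 0; 0, 0, 0; 0, 0, 0])
    (hV : V = !![d + k1, 0, 0; -k1, d + dT + r, 0; 0, -r, r1 + d + dT]) :
    IsUnit V.det ∧
    (∀ μ : ℂ, (Matrix.charpoly ((F * V⁻¹).map Complex.ofReal)).IsRoot μ →
      ‖μ‖ ≤ be * Lam * k1 / (Nv * d * (d + r + dT) * (d + k1))) ∧
    (∃ μ : ℂ, (Matrix.charpoly ((F * V⁻¹).map Complex.ofReal)).IsRoot μ ∧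
      ‖μ‖ = be * Lam * k1 / (Nv * d * (d + r + dT) * (d + k1))) := by
  set R0 := be * Lam * k1 / (Nv * d * (d + r + dT) * (d + k1))
  have hR0 : 0 < R0 := by positivity
  have hVW := mul_lowerBidiagonal_inv_fin_three (a := d + k1) (b := d + dT + r)
    (c := r1 + d + dT) (by positivity) (by positivity) (by positivity) (-k1) (-r)
  rw [← hV] at hVW
  set M := (F * V⁻¹).map Complex.ofReal
  have hF_rows : ∀ i j, i ≠ 0 → F i j = 0 := by
    intro i j hi
    fin_cases i <;> fin_cases j <;> simp_all
  have hM_rows : ∀ i j, i ≠ 0 → M i j = 0 := by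
    intro i j hi
    simp [M, mul_apply, hF_rows i _ hi]
  have hM00 : M 0 0 = R0 := by
    suffices (F * V⁻¹) 0 0 = R0 by simp [M, this]
    rw [inv_eq_right_inv hVW, hF]
    simp [mul_apply, Fin.sum_univ_three, R0]
    field_simp
    ring
  have hroot (μ : ℂ) : M.charpoly.IsRoot μ ↔ ∃ i, μ = M i i :=
    (isUpperTriangular_of_apply_eq_zero_of_ne_zero hM_rows).isRoot_charpoly_iff
  have hnorm_R0 : ‖(R0 : ℂ)‖ = R0 := by simp [hR0.le]
  refine ⟨isUnit_det_of_right_inverse hVW, fun μ hμ => ?_,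
    R0, (hroot _).2 ⟨0, hM00.symm⟩, hnorm_R0⟩
  obtain ⟨i, rfl⟩ := (hroot μ).1 hμ
  by_cases hi : i = 0
  · rw [hi, hM00, hnorm_R0]
  · simp [hM_rows i i hi, hR0.le]
end
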